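/- arXiv:1805.08146 — 6 statements merged into one kernel-verified Lean document; each statement's English description precedes it below -/
import Mathlib

section
/- The number of sublattices of index n in the 3-dimensional lattice Z^3 equals ω(n) := ∑_{k ∣ n} k·σ₁(k). -/
/-- σ₁(n): the sum of the divisors of `n`. -/
def sigma1 (n : ℕ) : ℕ := ∑ d ∈ n.divisors, d

/-- ω(n) = ∑_{k ∣ n} k · σ₁(k). -/
def omegaFn (n : ℕ) : ℕ := ∑ k ∈ n.divisors, k * sigma1 k

/-!
A subgroup `H` of finite index in `ℤ × G` meets `0 × G` in a subgroup `K` and projects onto `aℤ`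
for some `a > 0`, and the `g` with `(a, g) ∈ H` form a coset of `K`. Conversely `K`, `a` and a
coset `g + K` give back `H = ℤ • (a, g) + 0 × K`, of index `a · [G : K]`. Hence `ℤ × G` has
`∑_{d ∣ n} d · #{K ≤ G : [G : K] = d}` subgroups of index `n`. Since `ℤ` has exactly one subgroup
of each index, `ℤ²` has `σ₁(d)` subgroups of index `d`, and `ℤ³ = ℤ × ℤ²` has `ω(n)` of index `n`.
-/

lemma Nat.div_ne_zero_of_mem_divisors {n d : ℕ} (hd : d ∈ n.divisors) : n / d ≠ 0 :=
  (Nat.div_pos (Nat.divisor_le hd) (Nat.pos_of_mem_divisors hd)).ne'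

namespace AddSubgroup

variable {G : Type*} [AddCommGroup G]

def skewHom (a : ℤ) (g : G) : ℤ × G →+ ℤ × G where
  toFun p := (p.1 * a, p.2 + p.1 • g)
  map_zero' := by simp
  map_add' p q := by
    ext
    · simp [add_mul]
    · simp only [Prod.snd_add, Prod.fst_add, add_smul]; abel

lemma skewHom_injective {a : ℤ} (ha : a ≠ 0) (g : G) : Function.Injective (skewHom a g) := by
  intro p q h
  have h1 : p.1 = q.1 := mul_right_cancel₀ ha (congrArg Prod.fst h)
  have h2 : p.2 + p.1 • g = q.2 + q.1 • g := congrArg Prod.snd h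
  rw [h1, add_left_inj] at h2
  exact Prod.ext h1 h2

lemma range_skewHom (a : ℤ) (g : G) :
    (skewHom a g).range = (zmultiples a).comap (AddMonoidHom.fst ℤ G) := by
  ext p
  simp only [AddMonoidHom.mem_range, mem_comap, AddMonoidHom.coe_fst, Int.mem_zmultiples_iff]
  constructor
  · rintro ⟨q, rfl⟩
    exact Dvd.intro_left _ rfl
  · rintro ⟨k, hk⟩
    exact ⟨(k, p.2 - k • g), by ext <;> simp [skewHom, hk, mul_comm]⟩

/-- The subgroup `ℤ • (a, g) + 0 × K` of `ℤ × G`. -/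
def skewProd (K : AddSubgroup G) (a : ℤ) (g : G) : AddSubgroup (ℤ × G) :=
  ((⊤ : AddSubgroup ℤ).prod K).map (skewHom a g)

lemma mem_skewProd {K : AddSubgroup G} {a : ℤ} {g : G} {p : ℤ × G} :
    p ∈ skewProd K a g ↔ ∃ k : ℤ, p.1 = k * a ∧ p.2 - k • g ∈ K := by
  constructor
  · rintro ⟨⟨k, x⟩, ⟨-, hx⟩, rfl⟩
    exact ⟨k, rfl, by simpa [skewHom] using hx⟩
  · rintro ⟨k, h1, h2⟩
    exact ⟨(k, p.2 - k • g), ⟨trivial, h2⟩, by ext <;> simp [skewHom, h1]⟩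

lemma index_skewProd (K : AddSubgroup G) {a : ℤ} (ha : a ≠ 0) (g : G) :
    (skewProd K a g).index = K.index * a.natAbs := by
  rw [skewProd, index_map_of_injective _ (skewHom_injective ha g), range_skewHom,
    index_comap_of_surjective _ Prod.fst_surjective, Int.index_zmultiples, index_prod, index_top,
    one_mul]

lemma comap_inr_skewProd (K : AddSubgroup G) {a : ℤ} (ha : a ≠ 0) (g : G) :
    (skewProd K a g).comap (AddMonoidHom.inr ℤ G) = K := by
  ext x
  simp only [mem_comap, AddMonoidHom.inr_apply, mem_skewProd]
  constructor
  · rintro ⟨k, hk, hx⟩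
    obtain rfl : k = 0 := by simpa [ha, eq_comm] using hk
    simpa using hx
  · exact fun hx => ⟨0, by simp, by simpa using hx⟩

lemma skewProd_eq_skewProd_iff {K : AddSubgroup G} {a : ℤ} (ha : a ≠ 0) {g g' : G} :
    skewProd K a g = skewProd K a g' ↔ g - g' ∈ K := by
  constructor
  · intro h
    have hg : (a, g) ∈ skewProd K a g' := h ▸ mem_skewProd.2 ⟨1, by simp, by simp⟩
    obtain ⟨k, hk, hgk⟩ := mem_skewProd.1 hg
    obtain rfl : k = 1 := by simpa [ha] using (mul_left_eq_self₀.1 hk.symm)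
    simpa using hgk
  · intro h
    ext p
    simp only [mem_skewProd]
    refine exists_congr fun k => and_congr_right fun _ => ?_
    have : p.2 - k • g' = p.2 - k • g + k • (g - g') := by rw [smul_sub]; abel
    rw [this, add_mem_cancel_right (K.zsmul_mem h k)]

lemma exists_eq_skewProd (H : AddSubgroup (ℤ × G)) (hH : H.index ≠ 0) :
    ∃ (K : AddSubgroup G) (a : ℤ) (g : G), 0 < a ∧ H = skewProd K a g := by
  obtain ⟨a, ha⟩ := Int.subgroup_cyclic (H.map (AddMonoidHom.fst ℤ G))
  rw [← zmultiples_eq_closure, ← Int.zmultiples_natAbs] at ha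
  have ha0 : 0 < a.natAbs := by
    refine Nat.pos_of_ne_zero fun h0 => hH (Nat.eq_zero_of_zero_dvd ?_)
    simpa [ha, Int.index_zmultiples, h0] using
      index_map_dvd (f := AddMonoidHom.fst ℤ G) H Prod.fst_surjective
  obtain ⟨⟨k, g⟩, hg, hk⟩ : (a.natAbs : ℤ) ∈ H.map (AddMonoidHom.fst ℤ G) :=
    ha ▸ mem_zmultiples _
  obtain rfl : k = a.natAbs := hk
  refine ⟨H.comap (AddMonoidHom.inr ℤ G), a.natAbs, g, by exact_mod_cast ha0, ?_⟩
  ext ⟨m, x⟩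
  simp only [mem_skewProd, mem_comap, AddMonoidHom.inr_apply]
  constructor
  · intro hp
    obtain ⟨k, rfl⟩ : m ∈ zmultiples (a.natAbs : ℤ) := ha ▸ mem_map_of_mem _ hp
    refine ⟨k, by simp, ?_⟩
    simpa using H.sub_mem hp (H.zsmul_mem hg k)
  · rintro ⟨k, rfl, hx⟩
    simpa using H.add_mem hx (H.zsmul_mem hg k)

noncomputable def skewProdOfIndex (n : ℕ) :
    (Σ d : n.divisors, Σ K : {K : AddSubgroup G // K.index = d}, G ⧸ K.1) →
      {H : AddSubgroup (ℤ × G) // H.index = n} := fun s =>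
  ⟨skewProd s.2.1.1 (n / s.1 : ℕ) s.2.2.out, by
    obtain ⟨⟨d, hd⟩, ⟨K, hK : K.index = d⟩, -⟩ := s
    subst hK
    rw [index_skewProd _ (mod_cast Nat.div_ne_zero_of_mem_divisors hd), Int.natAbs_natCast,
      Nat.mul_div_cancel' (Nat.dvd_of_mem_divisors hd)]⟩

lemma skewProdOfIndex_bijective {n : ℕ} (hn : n ≠ 0) :
    Function.Bijective (skewProdOfIndex (G := G) n) := by
  constructor
  · rintro ⟨⟨d, hd⟩, ⟨K, hK : K.index = d⟩, x⟩ ⟨⟨d', hd'⟩, ⟨K', hK' : K'.index = d'⟩, x'⟩ h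
    subst hK hK'
    have h : skewProd K (n / K.index : ℕ) x.out = skewProd K' (n / K'.index : ℕ) x'.out :=
      congrArg Subtype.val h
    have ha : ((n / K.index : ℕ) : ℤ) ≠ 0 := mod_cast Nat.div_ne_zero_of_mem_divisors hd
    have ha' : ((n / K'.index : ℕ) : ℤ) ≠ 0 := mod_cast Nat.div_ne_zero_of_mem_divisors hd'
    obtain rfl : K = K' := by
      rw [← comap_inr_skewProd K ha x.out, h, comap_inr_skewProd K' ha']
    obtain rfl : x = x' := by
      rw [skewProd_eq_skewProd_iff ha] at h
      rw [← QuotientAddGroup.out_eq' x, ← QuotientAddGroup.out_eq' x',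
        QuotientAddGroup.eq_iff_sub_mem]
      exact h
    rfl
  · rintro ⟨H, hH⟩
    obtain ⟨K, a, g, ha, rfl⟩ := exists_eq_skewProd H (hH ▸ hn)
    have hn' : K.index * a.natAbs = n := (index_skewProd K ha.ne' g).symm.trans hH
    have hK : K.index ∈ n.divisors := Nat.mem_divisors.2 ⟨Dvd.intro _ hn', hn⟩
    refine ⟨⟨⟨K.index, hK⟩, ⟨K, rfl⟩, g⟩, Subtype.ext ?_⟩
    have ha' : ((n / K.index : ℕ) : ℤ) = a := by
      rw [← hn', Nat.mul_div_cancel_left _ (Nat.pos_of_mem_divisors hK)]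
      exact Int.natAbs_of_nonneg ha.le
    simp only [skewProdOfIndex, ha', skewProd_eq_skewProd_iff ha.ne']
    rw [← QuotientAddGroup.eq_iff_sub_mem, QuotientAddGroup.out_eq']

instance finite_quotient_of_index_eq_divisor {n : ℕ} (d : n.divisors)
    (K : {K : AddSubgroup G // K.index = d}) : Finite (G ⧸ K.1) :=
  Nat.finite_of_card_ne_zero <| by
    rw [← index_eq_card, K.2]
    exact (Nat.pos_of_mem_divisors d.2).ne'

variable {n : ℕ} (hn : n ≠ 0) [∀ d : n.divisors, Finite {K : AddSubgroup G // K.index = d}]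
include hn

theorem finite_subtype_index_eq_int_prod :
    Finite {H : AddSubgroup (ℤ × G) // H.index = n} :=
  Finite.of_surjective _ (skewProdOfIndex_bijective hn).2

theorem card_subtype_index_eq_int_prod :
    Nat.card {H : AddSubgroup (ℤ × G) // H.index = n} =
      ∑ d ∈ n.divisors, Nat.card {K : AddSubgroup G // K.index = d} * d := by
  rw [← Nat.card_eq_of_bijective _ (skewProdOfIndex_bijective hn), Nat.card_sigma,
    ← Finset.sum_coe_sort n.divisors]
  refine Finset.sum_congr rfl fun d _ => ?_
  have := Fintype.ofFinite {K : AddSubgroup G // K.index = d}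
  have hcard (K : {K : AddSubgroup G // K.index = d}) : Nat.card (G ⧸ K.1) = d :=
    K.1.index_eq_card.symm.trans K.2
  simp only [Nat.card_sigma, hcard, Finset.sum_const, Finset.card_univ, smul_eq_mul,
    Nat.card_eq_fintype_card]

end AddSubgroup

lemma Int.addSubgroup_eq_zmultiples_index (K : AddSubgroup ℤ) :
    K = .zmultiples (K.index : ℤ) := by
  obtain ⟨a, rfl⟩ := Int.subgroup_cyclic K
  rw [← AddSubgroup.zmultiples_eq_closure, Int.index_zmultiples, Int.zmultiples_natAbs]

noncomputable instance Int.uniqueAddSubgroupIndexEq (d : ℕ) :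
    Unique {K : AddSubgroup ℤ // K.index = d} where
  default := ⟨.zmultiples (d : ℤ), by rw [Int.index_zmultiples, Int.natAbs_natCast]⟩
  uniq K := Subtype.ext (K.2 ▸ Int.addSubgroup_eq_zmultiples_index K.1)

lemma card_subtype_index_eq_int_prod_int {d : ℕ} (hd : d ≠ 0) :
    Nat.card {K : AddSubgroup (ℤ × ℤ) // K.index = d} = sigma1 d := by
  simp only [AddSubgroup.card_subtype_index_eq_int_prod hd, Nat.card_unique, one_mul, sigma1]

/-- The number of sublattices of index `n` in `ℤ³` equals `ω(n)`. -/
theorem num_sublattices_Z3 (n : ℕ) (hn : 0 < n) :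
    Nat.card {H : AddSubgroup (ℤ × ℤ × ℤ) // H.index = n} = omegaFn n := by
  have (d : n.divisors) : Finite {K : AddSubgroup (ℤ × ℤ) // K.index = d} :=
    AddSubgroup.finite_subtype_index_eq_int_prod (Nat.pos_of_mem_divisors d.2).ne'
  rw [AddSubgroup.card_subtype_index_eq_int_prod hn.ne', omegaFn]
  refine Finset.sum_congr rfl fun d hd => ?_
  rw [card_subtype_index_eq_int_prod_int (Nat.pos_of_mem_divisors hd).ne', mul_comm]
end

section
/- Let ℓ : Z^2 → Z^2 be the automorphism (x,y) ↦ (−y,x). A subgroup H ≤ Z^2 of finite index satisfies ℓ(H) = H if and only if H is generated by a pair of elements of the form (p,q) and (−q,p); in this case the index |Z^2 : H| equals p² + q². -/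
/-!
Identify `ℤ²` with the Gaussian integers via `(x, y) ↦ x + y i`. Then `ℓ` becomes
multiplication by `i`, and since every element of `ℤ[i]` is an integer combination of `1` and
`i`, the `ℓ`-invariant subgroups are exactly the ideals of `ℤ[i]`. As `ℤ[i]` is a principal
ideal domain, these are the ideals `(p + q i)`, which as subgroups are generated by `p + q i`
and `i (p + q i) = -q + p i`; the index of `(z)` is `|N(z)| = p² + q²`.
-/

/-- The rotation automorphism `ℓ : ℤ² → ℤ²`, `(x, y) ↦ (-y, x)`, as an additive hom. -/
def ell : (ℤ × ℤ) →+ ℤ × ℤ :=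
  AddMonoidHom.mk' (fun p => (-p.2, p.1)) (by intro a b; simp [Prod.ext_iff]; ring)

namespace Zsqrtd

variable {d : ℤ}

variable (d) in
@[simps]
def prodAddEquiv : ℤ × ℤ ≃+ ℤ√d where
  toFun p := ⟨p.1, p.2⟩
  invFun z := (z.re, z.im)
  left_inv _ := rfl
  right_inv _ := rfl
  map_add' _ _ := rfl

variable (d) in
noncomputable def basis : Module.Basis (Fin 2) ℤ (ℤ√d) :=
  (Module.Basis.finTwoProd ℤ).map (prodAddEquiv d).toIntLinearEquiv

instance : Module.Free ℤ (ℤ√d) := .of_basis (basis d)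

instance : Module.Finite ℤ (ℤ√d) := .of_basis (basis d)

theorem algebraNorm_eq_norm (z : ℤ√d) : Algebra.norm ℤ z = z.norm := by
  rw [Algebra.norm_eq_matrix_det (basis d), Matrix.det_fin_two]
  simp [Algebra.leftMulMatrix_eq_repr_mul, basis, norm_def]

theorem mul_eq_re_smul_add_im_smul_sqrtd_mul (c z : ℤ√d) :
    c * z = c.re • z + c.im • (sqrtd * z) := by
  ext <;> simp [re_mul, im_mul]
  ring

theorem exists_ideal_toAddSubgroup_eq_iff {S : AddSubgroup (ℤ√d)} :
    (∃ I : Ideal (ℤ√d), I.toAddSubgroup = S) ↔ ∀ z ∈ S, sqrtd * z ∈ S := by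
  constructor
  · rintro ⟨I, rfl⟩ z hz
    exact I.mul_mem_left sqrtd hz
  · intro hS
    refine ⟨{ S.toIntSubmodule with smul_mem' := fun c z hz => ?_ }, rfl⟩
    rw [smul_eq_mul, mul_eq_re_smul_add_im_smul_sqrtd_mul]
    exact S.add_mem (S.zsmul_mem hz _) (S.zsmul_mem (hS z hz) _)

theorem span_singleton_toAddSubgroup (z : ℤ√d) :
    (Ideal.span {z}).toAddSubgroup = AddSubgroup.closure {z, sqrtd * z} := by
  apply _root_.le_antisymm
  · intro x hx
    obtain ⟨c, rfl⟩ := Ideal.mem_span_singleton'.mp hx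
    rw [mul_eq_re_smul_add_im_smul_sqrtd_mul c z]
    have hz : z ∈ AddSubgroup.closure {z, sqrtd * z} := AddSubgroup.subset_closure (by simp)
    have hsz : sqrtd * z ∈ AddSubgroup.closure {z, sqrtd * z} :=
      AddSubgroup.subset_closure (by simp)
    exact add_mem (zsmul_mem hz _) (zsmul_mem hsz _)
  · rw [AddSubgroup.closure_le]
    rintro x (rfl | rfl)
    · exact Ideal.mem_span_singleton_self x
    · exact Ideal.mul_mem_left _ _ (Ideal.mem_span_singleton_self z)

end Zsqrtd

namespace GaussianInt

theorem index_span_singleton (z : GaussianInt) :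
    (Ideal.span {z}).toAddSubgroup.index = z.norm.natAbs := by
  rw [← Ideal.absNorm_eq_index, Ideal.absNorm_span_singleton, Zsqrtd.algebraNorm_eq_norm]

end GaussianInt

open Zsqrtd

theorem prodAddEquiv_ell (v : ℤ × ℤ) :
    prodAddEquiv (-1) (ell v) = sqrtd * prodAddEquiv (-1) v := by
  ext <;> simp [ell]

theorem map_ell_eq_self_iff (H : AddSubgroup (ℤ × ℤ)) :
    H.map ell = H ↔ ∀ v ∈ H, ell v ∈ H := by
  refine ⟨fun h v hv => h ▸ AddSubgroup.mem_map_of_mem ell hv, fun h => ?_⟩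
  refine _root_.le_antisymm (AddSubgroup.map_le_iff_le_comap.mpr h) fun v hv => ?_
  -- `ℓ⁴ = id`, so `v = ℓ (ℓ³ v)`
  exact ⟨_, h _ (h _ (h _ hv)), by simp [ell]⟩

theorem map_ell_eq_self_iff_exists_ideal (H : AddSubgroup (ℤ × ℤ)) :
    H.map ell = H ↔ ∃ I : Ideal GaussianInt, I.toAddSubgroup = H.map (prodAddEquiv (-1)) := by
  rw [map_ell_eq_self_iff, exists_ideal_toAddSubgroup_eq_iff]
  constructor
  · rintro h _ ⟨v, hv, rfl⟩
    exact ⟨ell v, h v hv, prodAddEquiv_ell v⟩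
  · intro h v hv
    obtain ⟨w, hw, hwv⟩ := h _ ⟨v, hv, rfl⟩
    exact (prodAddEquiv (-1)).injective (hwv.trans (prodAddEquiv_ell v).symm) ▸ hw

theorem map_prodAddEquiv_closure_pair (p q : ℤ) :
    (AddSubgroup.closure {(p, q), (-q, p)}).map (prodAddEquiv (-1)) =
      (Ideal.span {⟨p, q⟩} : Ideal GaussianInt).toAddSubgroup := by
  rw [AddMonoidHom.map_closure, span_singleton_toAddSubgroup, muld_val, neg_one_mul,
    Set.image_pair]
  rfl

theorem ell_invariant_iff_general (H : AddSubgroup (ℤ × ℤ)) :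
    (H.map ell = H ↔ ∃ p q : ℤ, H = AddSubgroup.closure {(p, q), (-q, p)}) ∧
    ∀ p q : ℤ, H = AddSubgroup.closure {(p, q), (-q, p)} →
      (H.index : ℤ) = p ^ 2 + q ^ 2 := by
  refine ⟨?_, fun p q hH => ?_⟩
  · rw [map_ell_eq_self_iff_exists_ideal]
    constructor
    · rintro ⟨I, hI⟩
      obtain ⟨z, rfl⟩ := (IsPrincipalIdealRing.principal I).principal
      refine ⟨z.re, z.im, AddSubgroup.map_injective
        (f := (prodAddEquiv (-1) : ℤ × ℤ →+ GaussianInt)) (prodAddEquiv (-1)).injective ?_⟩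
      rw [← hI, map_prodAddEquiv_closure_pair]
    · rintro ⟨p, q, rfl⟩
      exact ⟨_, (map_prodAddEquiv_closure_pair p q).symm⟩
  · rw [hH, ← AddSubgroup.index_map_equiv _ (prodAddEquiv (-1)), map_prodAddEquiv_closure_pair,
      GaussianInt.index_span_singleton, GaussianInt.abs_natCast_norm, norm_def]
    ring

/-- A finite-index subgroup `H ≤ ℤ²` satisfies `ℓ(H) = H` iff `H` is generated by a pair
of elements `(p, q)`, `(-q, p)`; in this case `|ℤ² : H| = p² + q²`. -/
theorem ell_invariant_iff (H : AddSubgroup (ℤ × ℤ)) (hfin : H.index ≠ 0) :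
    (H.map ell = H ↔ ∃ p q : ℤ, H = AddSubgroup.closure {(p, q), (-q, p)}) ∧
    ∀ p q : ℤ, H = AddSubgroup.closure {(p, q), (-q, p)} →
      (H.index : ℤ) = p ^ 2 + q ^ 2 :=
  ell_invariant_iff_general H
end

section
/- Let ℓ : Z^2 → Z^2 be the automorphism (x,y) ↦ (−y,x). For each ℓ-invariant subgroup H of index n in Z^2, the number of cosets ν ∈ Z^2/H fixed by the induced action of ℓ is 1 if n is odd and 2 if n is even. -/
theorem AddMonoidHom.card_ker_eq_index_range {G : Type*} [AddGroup G] [Finite G] (ψ : G →+ G) :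
    Nat.card ψ.ker = ψ.range.index := by
  have hpos : 0 < Nat.card ψ.range := Nat.card_pos
  refine Nat.eq_of_mul_eq_mul_left hpos ?_
  rw [AddSubgroup.card_mul_index, ← AddSubgroup.index_ker, mul_comm, AddSubgroup.card_mul_index]

namespace QuotientAddGroup

variable {A : Type*} [AddCommGroup A] {H : AddSubgroup A} (f : A →+ A) (hf : H ≤ H.comap f)

theorem range_map_sub_id :
    (map H H f hf - AddMonoidHom.id (A ⧸ H)).range = (f - AddMonoidHom.id A).range.map (mk' H) :=
  calc _ = ((map H H f hf - AddMonoidHom.id (A ⧸ H)).comp (mk' H)).range := by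
        rw [AddMonoidHom.range_comp, (mk' H).range_eq_top_of_surjective (mk'_surjective H),
          ← AddMonoidHom.range_eq_map]
    _ = ((mk' H).comp (f - AddMonoidHom.id A)).range := congrArg AddMonoidHom.range (by ext; rfl)
    _ = _ := AddMonoidHom.range_comp _ _

theorem card_fixed_map_eq_index [H.FiniteIndex] :
    Nat.card {ν : A ⧸ H // map H H f hf ν = ν} = ((f - AddMonoidHom.id A).range ⊔ H).index :=
  calc _ = Nat.card (map H H f hf - AddMonoidHom.id (A ⧸ H)).ker :=
        Nat.card_congr (Equiv.subtypeEquivRight fun ν => by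
          rw [AddMonoidHom.mem_ker, AddMonoidHom.sub_apply, sub_eq_zero, AddMonoidHom.id_apply])
    _ = _ := by
      rw [AddMonoidHom.card_ker_eq_index_range, range_map_sub_id, AddSubgroup.index_map, ker_mk',
        (mk' H).range_eq_top_of_surjective (mk'_surjective H), AddSubgroup.index_top, mul_one]

end QuotientAddGroup

theorem AddMonoidHom.exists_ne_zero_apply_eq_self_of_two_dvd_card {G : Type*} [AddCommGroup G]
    [Finite G] (h2 : 2 ∣ Nat.card G) (L : G →+ G) (hL : ∀ ν, L (L ν) = -ν) : ∃ ν ≠ 0, L ν = ν := by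
  obtain ⟨ν, hν⟩ := exists_prime_addOrderOf_dvd_card' 2 h2
  have hν0 : ν ≠ 0 := by rintro rfl; simp at hν
  have hνν : ν + ν = 0 := by rw [← two_nsmul, ← hν, addOrderOf_nsmul_eq_zero]
  by_cases hfix : L ν = ν
  · exact ⟨ν, hν0, hfix⟩
  · refine ⟨L ν - ν, sub_ne_zero.mpr hfix, ?_⟩
    have hLν : L ν + L ν = 0 := by rw [← map_add, hνν, map_zero]
    rw [map_sub, hL]
    calc -ν - L ν = -ν - L ν + (L ν + L ν) := by rw [hLν, add_zero]
      _ = L ν - ν := by abel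

def parity : ℤ × ℤ →+ ZMod 2 :=
  (Int.castAddHom (ZMod 2)).comp ((AddMonoidHom.id ℤ).coprod (AddMonoidHom.id ℤ))

theorem index_ker_parity : parity.ker.index = 2 := by
  have hsurj : Function.Surjective parity := fun c => ⟨((c.val : ℤ), 0), by simp [parity]⟩
  rw [AddSubgroup.index_ker, AddMonoidHom.range_eq_top.mpr hsurj,
    Nat.card_congr AddSubgroup.topEquiv.toEquiv, Nat.card_zmod]

theorem ker_parity_le_range_ell_sub_id : parity.ker ≤ (ell - AddMonoidHom.id _).range := by
  rintro ⟨a, b⟩ h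
  obtain ⟨k, hk⟩ : (2 : ℤ) ∣ a + b := (ZMod.intCast_zmod_eq_zero_iff_dvd _ 2).mp h
  exact ⟨(k - a, -k), by simp [ell, Prod.ext_iff]; omega⟩

theorem ell_ell (v : ℤ × ℤ) : ell (ell v) = -v := by
  simp [ell, Prod.ext_iff]

theorem map_ell_map_ell {H : AddSubgroup (ℤ × ℤ)} (hH : H ≤ H.comap ell) (ν : (ℤ × ℤ) ⧸ H) :
    QuotientAddGroup.map H H ell hH (QuotientAddGroup.map H H ell hH ν) = -ν := by
  induction ν using QuotientAddGroup.induction_on with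
  | H v => simp only [QuotientAddGroup.map_mk, ell_ell, QuotientAddGroup.mk_neg]

/-- For an `ℓ`-invariant subgroup `H ≤ ℤ²` of index `n`, the number of cosets `ν ∈ ℤ²/H`
fixed by the induced action of `ℓ` is `1` if `n` is odd and `2` if `n` is even. -/
theorem card_fixed_cosets (n : ℕ) (hn : 0 < n) (H : AddSubgroup (ℤ × ℤ))
    (hidx : H.index = n) (hinv : H.map ell = H) :
    Nat.card {ν : (ℤ × ℤ) ⧸ H //
        QuotientAddGroup.map H H ell
          (fun g hg => AddSubgroup.mem_comap.mpr
            (hinv ▸ AddSubgroup.mem_map_of_mem ell hg)) ν = ν} =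
      if Odd n then 1 else 2 := by
  have : H.FiniteIndex := ⟨by omega⟩
  have hell : H ≤ H.comap ell := by rw [← AddSubgroup.map_le_iff_le_comap, hinv]
  have hcard := QuotientAddGroup.card_fixed_map_eq_index ell hell
  set d := ((ell - AddMonoidHom.id _).range ⊔ H).index
  have hd2 : d ∣ 2 := index_ker_parity ▸
    AddSubgroup.index_dvd_of_le (ker_parity_le_range_ell_sub_id.trans le_sup_left)
  have hdn : d ∣ n := hidx ▸ AddSubgroup.index_dvd_of_le le_sup_right
  rw [hcard]
  split_ifs with hodd
  · rcases (Nat.dvd_prime Nat.prime_two).mp hd2 with hd | hd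
    · exact hd
    · exact absurd (even_iff_two_dvd.mpr (hd ▸ hdn)) (Nat.not_even_iff_odd.mpr hodd)
  · have h2 : 2 ∣ Nat.card ((ℤ × ℤ) ⧸ H) :=
      (Nat.not_odd_iff_even.mp hodd).two_dvd.trans hidx.symm.dvd
    obtain ⟨ν, hν0, hν⟩ :=
      AddMonoidHom.exists_ne_zero_apply_eq_self_of_two_dvd_card h2 _ (map_ell_map_ell hell)
    rcases (Nat.dvd_prime Nat.prime_two).mp hd2 with hd | hd
    · have hsub := (Nat.card_eq_one_iff_unique.mp (hcard.trans hd)).1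
      exact absurd (congrArg Subtype.val (@Subsingleton.elim _ hsub ⟨ν, hν⟩ ⟨0, map_zero _⟩)) hν0
    · exact hd
end

section
/- Every subgroup of finite index in G₂ = ⟨x, y, z : [x,y] = 1, zxz⁻¹ = x⁻¹, zyz⁻¹ = y⁻¹⟩ is isomorphic to either G₂ itself or to Z³. -/
/-- The relations of `G₂ = ⟨x, y, z : xyx⁻¹y⁻¹ = 1, zxz⁻¹ = x⁻¹, zyz⁻¹ = y⁻¹⟩`,
with `x, y, z` being the generators `0, 1, 2 : Fin 3`. -/
def relsG2 : Set (FreeGroup (Fin 3)) :=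
  { FreeGroup.of 0 * FreeGroup.of 1 * (FreeGroup.of 0)⁻¹ * (FreeGroup.of 1)⁻¹,
    FreeGroup.of 2 * FreeGroup.of 0 * (FreeGroup.of 2)⁻¹ * FreeGroup.of 0,
    FreeGroup.of 2 * FreeGroup.of 1 * (FreeGroup.of 2)⁻¹ * FreeGroup.of 1 }

/-- The fundamental group `G₂ = π₁(𝒢₂)`. -/
abbrev G2 : Type := PresentedGroup relsG2

/-- The generator `x` of `G₂`. -/
def X : G2 := PresentedGroup.of 0
/-- The generator `y` of `G₂`. -/
def Y : G2 := PresentedGroup.of 1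
/-- The generator `z` of `G₂`. -/
def Z : G2 := PresentedGroup.of 2

/-!
`G₂` is the semidirect product `ℤ² ⋊ ℤ` in which `k ∈ ℤ` acts on `ℤ²` by `(-1)ᵏ`. Let `Γ` be a
subgroup of finite index. Its image in `ℤ` is `cℤ` with `c ≠ 0`, and `L = Γ ∩ ℤ²` has finite index
in `ℤ²`, so `L ≅ ℤ²`. For `s ∈ Γ` lying over `c`, `(l, k) ↦ l sᵏ` is an isomorphism `L ⋊ ℤ ≃ Γ`,
where `k` acts on `L` by `(-1)ᶜᵏ`. Hence `Γ ≅ ℤ² ⋊ ℤ ≅ G₂` if `c` is odd, and `Γ ≅ ℤ² × ℤ` if `c`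
is even.
-/

open SemidirectProduct Multiplicative

section InvAction

variable (N : Type*) [CommGroup N]

def invAction : Multiplicative ℤ →* MulAut N := zpowersHom _ (MulEquiv.inv N)

variable {N}

theorem invAction_apply (k : Multiplicative ℤ) (n : N) :
    invAction N k n = n ^ (k.toAdd.negOnePow : ℤ) := by
  change (MulEquiv.inv N ^ k.toAdd) n = _
  induction k.toAdd using Int.induction_on with
  | zero => simp
  | succ i ih =>
    rw [add_comm, zpow_add, zpow_one, MulAut.mul_apply, ih, add_comm, Int.negOnePow_succ,
      Units.val_neg, zpow_neg]
    rfl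
  | pred i ih =>
    rw [sub_eq_neg_add, zpow_add, zpow_neg_one, MulAut.mul_apply, ih, ← sub_eq_neg_add,
      Int.negOnePow_sub, Int.negOnePow_one, mul_neg_one, Units.val_neg, zpow_neg]
    rfl

theorem map_invAction {N' : Type*} [CommGroup N'] (f : N →* N') (k : Multiplicative ℤ) (n : N) :
    f (invAction N k n) = invAction N' k (f n) := by
  rw [invAction_apply, invAction_apply, map_zpow]

theorem invAction_comp_zpowersHom_of_even {c : Multiplicative ℤ} (hc : Even c.toAdd) :
    (invAction N).comp (zpowersHom _ c) = 1 := by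
  ext n
  simp [invAction_apply, Int.negOnePow_even _ hc]

theorem invAction_comp_zpowersHom_of_odd {c : Multiplicative ℤ} (hc : Odd c.toAdd) :
    (invAction N).comp (zpowersHom _ c) = invAction N := by
  ext n
  simp [invAction_apply, Int.negOnePow_odd _ hc]

end InvAction

theorem conj_zpow_eq_zpow_negOnePow {G : Type*} [Group G] {z g : G} (h : z * g * z⁻¹ = g⁻¹)
    (k : ℤ) : z ^ k * g * (z ^ k)⁻¹ = g ^ (k.negOnePow : ℤ) := by
  have h' : z⁻¹ * g * z = g⁻¹ := by
    have := congrArg (fun x => z⁻¹ * x⁻¹ * z) h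
    simp only [inv_inv] at this
    rw [← this]
    group
  induction k using Int.induction_on with
  | zero => simp
  | succ i ih =>
    calc z ^ (i + 1 : ℤ) * g * (z ^ (i + 1 : ℤ))⁻¹
        = z ^ (i : ℤ) * (z * g * z⁻¹) * (z ^ (i : ℤ))⁻¹ := by group
      _ = (z ^ (i : ℤ) * g * (z ^ (i : ℤ))⁻¹)⁻¹ := by rw [h]; group
      _ = _ := by rw [ih, Int.negOnePow_succ, Units.val_neg, zpow_neg]
  | pred i ih =>
    calc z ^ (-i - 1 : ℤ) * g * (z ^ (-i - 1 : ℤ))⁻¹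
        = z ^ (-i : ℤ) * (z⁻¹ * g * z) * (z ^ (-i : ℤ))⁻¹ := by group
      _ = (z ^ (-i : ℤ) * g * (z ^ (-i : ℤ))⁻¹)⁻¹ := by rw [h']; group
      _ = _ := by
        rw [ih, Int.negOnePow_sub, Int.negOnePow_one, mul_neg_one, Units.val_neg, zpow_neg]

namespace SemidirectProduct

theorem mul_inl_mul_inv {N G : Type*} [CommGroup N] [Group G] {φ : G →* MulAut N}
    (g : N ⋊[φ] G) (n : N) : g * inl n * g⁻¹ = inl (φ g.right n) := by
  ext
  · simp [mul_comm]
  · simp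

theorem right_zpow {N G : Type*} [Group N] [Group G] {φ : G →* MulAut N} (g : N ⋊[φ] G) (k : ℤ) :
    (g ^ k).right = g.right ^ k :=
  map_zpow rightHom g k

def congrInvAction {N N' : Type*} [CommGroup N] [CommGroup N'] (e : N ≃* N') :
    N ⋊[invAction N] Multiplicative ℤ ≃* N' ⋊[invAction N'] Multiplicative ℤ :=
  congr e (MulEquiv.refl _) fun k => by
    ext n
    exact map_invAction e.toMonoidHom k n

end SemidirectProduct

theorem Subgroup.index_comap_ne_zero {G G' : Type*} [Group G] [Group G'] (f : G →* G')
    {H : Subgroup G'} (hH : H.index ≠ 0) : (H.comap f).index ≠ 0 := by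
  simpa using relIndex_comap_ne_zero f (K := ⊤) (by rwa [relIndex_top_right])

theorem Subgroup.nonempty_mulEquiv_of_index_ne_zero {A : Type*} [AddCommGroup A]
    [Module.Free ℤ A] [Module.Finite ℤ A] (L : Subgroup (Multiplicative A)) (hL : L.index ≠ 0) :
    Nonempty (L ≃* Multiplicative A) := by
  let e : Multiplicative A ≃* (Module.Free.ChooseBasisIndex ℤ A → Multiplicative ℤ) :=
    (Module.Free.chooseBasis ℤ A).equivFun.toAddEquiv.toMultiplicative.trans
      (MulEquiv.funMultiplicative _ _)
  obtain ⟨f⟩ := Int.subgroup_index_ne_zero_iff.mp ((L.index_map_equiv e).trans_ne hL)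
  exact ⟨(e.subgroupMap L).trans (f.trans e.symm)⟩

section Splitting

variable {N : Type*} [CommGroup N] (Γ : Subgroup (N ⋊[invAction N] Multiplicative ℤ))
  (s : N ⋊[invAction N] Multiplicative ℤ)

def Subgroup.splittingHom :
    Γ.comap inl ⋊[(invAction _).comp (zpowersHom _ s.right)] Multiplicative ℤ →*
      N ⋊[invAction N] Multiplicative ℤ :=
  lift (inl.comp (Γ.comap inl).subtype) (zpowersHom _ s) fun k => by
    refine MonoidHom.ext fun l => ?_
    simp only [MonoidHom.comp_apply, MulEquiv.coe_toMonoidHom, MulAut.conj_apply,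
      zpowersHom_apply, mul_inl_mul_inv, right_zpow, ← map_invAction]

variable {Γ s}

theorem Subgroup.splittingHom_apply (x) :
    Γ.splittingHom s x = inl (x.left : N) * s ^ x.right.toAdd := by
  conv_lhs => rw [← inl_left_mul_inr_right x]
  rw [map_mul, splittingHom, lift_inl, lift_inr]
  rfl

theorem Subgroup.splittingHom_injective (hs : s.right ≠ 1) :
    Function.Injective (Γ.splittingHom s) := by
  rw [injective_iff_map_eq_one]
  intro x hx
  rw [splittingHom_apply] at hx
  have hk : x.right.toAdd = 0 := by
    have := congrArg (fun g => g.right.toAdd) hx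
    simp only [mul_right, right_inl, right_zpow, one_mul, toAdd_zpow, smul_eq_mul,
      SemidirectProduct.one_right, toAdd_one, mul_eq_zero] at this
    exact this.resolve_right (by simpa using hs)
  rw [hk, zpow_zero, mul_one, map_eq_one_iff _ inl_injective, OneMemClass.coe_eq_one] at hx
  ext
  · simp [hx]
  · exact congrArg ofAdd hk

theorem Subgroup.range_splittingHom (hsΓ : s ∈ Γ)
    (hΓ : ∀ γ ∈ Γ, γ.right ∈ Subgroup.zpowers s.right) :
    (Γ.splittingHom s).range = Γ := by
  refine le_antisymm ?_ fun γ hγ => ?_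
  · rintro _ ⟨x, rfl⟩
    rw [splittingHom_apply]
    exact mul_mem x.left.2 (zpow_mem hsΓ _)
  · obtain ⟨k, hk⟩ := mem_zpowers_iff.mp (hΓ γ hγ)
    set δ := γ * (s ^ k)⁻¹
    have hδ : inl δ.left = δ := by
      have hδ1 : δ.right = 1 := by simp [δ, right_zpow, hk]
      conv_rhs => rw [← inl_left_mul_inr_right δ, hδ1, map_one, mul_one]
    refine ⟨⟨⟨δ.left, ?_⟩, ofAdd k⟩, ?_⟩
    · rw [mem_comap, hδ]
      exact mul_mem hγ (inv_mem (zpow_mem hsΓ k))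
    · rw [splittingHom_apply]
      exact (congrArg (· * s ^ k) hδ).trans (inv_mul_cancel_right γ _)

noncomputable def Subgroup.splittingEquiv (hsΓ : s ∈ Γ) (hs : s.right ≠ 1)
    (hΓ : ∀ γ ∈ Γ, γ.right ∈ Subgroup.zpowers s.right) :
    Γ.comap inl ⋊[(invAction _).comp (zpowersHom _ s.right)] Multiplicative ℤ ≃* Γ :=
  (MonoidHom.ofInjective (splittingHom_injective hs)).trans
    (MulEquiv.subgroupCongr (range_splittingHom hsΓ hΓ))

end Splitting

abbrev G2Model : Type := Multiplicative (ℤ × ℤ) ⋊[invAction _] Multiplicative ℤ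

namespace G2

theorem commute_X_Y : Commute X Y :=
  mul_inv_eq_iff_eq_mul.mp
    (mul_inv_eq_one.mp (PresentedGroup.one_of_mem (rels := relsG2) (by simp [relsG2])))

theorem Z_mul_X_mul_Z_inv : Z * X * Z⁻¹ = X⁻¹ :=
  eq_inv_of_mul_eq_one_left (PresentedGroup.one_of_mem (rels := relsG2) (by simp [relsG2]))

theorem Z_mul_Y_mul_Z_inv : Z * Y * Z⁻¹ = Y⁻¹ :=
  eq_inv_of_mul_eq_one_left (PresentedGroup.one_of_mem (rels := relsG2) (by simp [relsG2]))

def latticeHom : Multiplicative (ℤ × ℤ) →* G2 where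
  toFun u := X ^ u.toAdd.1 * Y ^ u.toAdd.2
  map_one' := by simp
  map_mul' u v := by
    simp only [toAdd_mul, Prod.fst_add, Prod.snd_add, zpow_add]
    exact ((commute_X_Y.zpow_zpow _ _).symm.mul_mul_mul_comm _ _).symm

theorem Z_mul_latticeHom_mul_Z_inv (u : Multiplicative (ℤ × ℤ)) :
    Z * latticeHom u * Z⁻¹ = (latticeHom u)⁻¹ := by
  simp only [latticeHom, MonoidHom.coe_mk, OneHom.coe_mk]
  rw [← conj_mul, ← conj_zpow, ← conj_zpow, Z_mul_X_mul_Z_inv, Z_mul_Y_mul_Z_inv, inv_zpow,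
    inv_zpow, mul_inv_rev]
  exact (commute_X_Y.zpow_zpow _ _).inv_inv.eq

def toModel : G2 →* G2Model :=
  PresentedGroup.toGroup (f := ![inl (ofAdd (1, 0)), inl (ofAdd (0, 1)), inr (ofAdd 1)]) <| by
    rintro r (rfl | rfl | rfl) <;> ext <;> simp [invAction_apply]

def ofModel : G2Model →* G2 :=
  lift latticeHom (zpowersHom G2 Z) fun k => by
    refine MonoidHom.ext fun u => ?_
    simp only [MonoidHom.comp_apply, MulEquiv.coe_toMonoidHom, MulAut.conj_apply,
      zpowersHom_apply]
    rw [invAction_apply, map_zpow, conj_zpow_eq_zpow_negOnePow (Z_mul_latticeHom_mul_Z_inv _)]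

theorem ofModel_comp_toModel : ofModel.comp toModel = MonoidHom.id G2 :=
  PresentedGroup.ext fun i => by fin_cases i <;> simp [toModel, ofModel, latticeHom, X, Y, Z]

theorem toModel_comp_ofModel : toModel.comp ofModel = MonoidHom.id G2Model := by
  refine hom_ext (MonoidHom.ext fun u => ?_) (MonoidHom.ext_mint (by simp [toModel, ofModel, Z]))
  simp only [MonoidHom.comp_apply, ofModel, lift_inl, latticeHom, MonoidHom.coe_mk,
    OneHom.coe_mk, map_mul, map_zpow, toModel, X, Y, PresentedGroup.toGroup.of]
  simp [← map_zpow, ← map_mul]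
  apply toAdd.injective
  simp

def equivModel : G2 ≃* G2Model :=
  MonoidHom.toMulEquiv toModel ofModel ofModel_comp_toModel toModel_comp_ofModel

end G2

theorem G2Model.nonempty_mulEquiv_of_index_ne_zero (Γ : Subgroup G2Model) (hΓ : Γ.index ≠ 0) :
    Nonempty (Γ ≃* G2Model) ∨ Nonempty (Γ ≃* Multiplicative (ℤ × ℤ × ℤ)) := by
  obtain ⟨g, hg⟩ := (Γ.map rightHom).isCyclic_iff_exists_zpowers_eq_top.mp inferInstance
  obtain ⟨s, hsΓ, rfl⟩ : g ∈ Γ.map rightHom := hg ▸ Subgroup.mem_zpowers g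
  have hΓs : ∀ γ ∈ Γ, γ.right ∈ Subgroup.zpowers s.right := fun γ hγ => by
    change rightHom γ ∈ Subgroup.zpowers (rightHom s)
    exact hg ▸ Subgroup.mem_map_of_mem _ hγ
  have hs : s.right ≠ 1 := by
    obtain ⟨n, hn, -, hnΓ⟩ := Γ.exists_pow_mem_of_index_ne_zero hΓ (inr (ofAdd 1))
    intro h1
    have := hΓs _ hnΓ
    simp [h1, ← map_pow] at this
    omega
  obtain ⟨eL⟩ := (Γ.comap inl).nonempty_mulEquiv_of_index_ne_zero (Γ.index_comap_ne_zero inl hΓ)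
  have e := (Γ.splittingEquiv hsΓ hs hΓs).symm
  rcases Int.even_or_odd s.right.toAdd with h | h
  · rw [invAction_comp_zpowersHom_of_even h] at e
    exact Or.inr ⟨e.trans <| mulEquivProd.trans <| (eL.prodCongr (MulEquiv.refl _)).trans <|
      (MulEquiv.prodMultiplicative _ _).symm.trans AddEquiv.prodAssoc.toMultiplicative⟩
  · rw [invAction_comp_zpowersHom_of_odd h] at e
    exact Or.inl ⟨e.trans (congrInvAction eL)⟩

/-- Every finite-index subgroup of `G₂` is isomorphic to `G₂` itself or to `ℤ³`. -/
theorem G2_finite_index_subgroups (H : Subgroup G2) (hfin : H.index ≠ 0) :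
    Nonempty (H ≃* G2) ∨ Nonempty (H ≃* Multiplicative (ℤ × ℤ × ℤ)) := by
  have eH := G2.equivModel.subgroupMap H
  rcases G2Model.nonempty_mulEquiv_of_index_ne_zero _ ((H.index_map_equiv _).trans_ne hfin) with
    ⟨⟨e⟩⟩ | ⟨⟨e⟩⟩
  · exact Or.inl ⟨(eH.trans e).trans G2.equivModel.symm⟩
  · exact Or.inr ⟨eH.trans e⟩
end

section
/- The number of subgroups of index n in G₂ = ⟨x, y, z : [x,y]=1, zxz⁻¹=x⁻¹, zyz⁻¹=y⁻¹⟩ that are isomorphic to G₂ equals ω(n) − ω(n/2), where ω(m) = ∑_{k∣m} k·σ₁(k) and ω(n/2) = 0 if n is odd. -/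
/-!
`G₂` is the semidirect product `ℤ² ⋊ ℤ` in which the generator of `ℤ` acts by `-1`: every element
is uniquely `X^x Y^y Z^c`. A subgroup `H` of finite index meets the translations `ℤ²` in a lattice
`L` and projects onto `mℤ`. If `m` is even, `H` is abelian, so `H ≄ G₂`. If `m` is odd, `H` is
determined by `m`, `L` and the class modulo `L` of the translation part `v` of any element of `H`
over `m`; conversely every such triple gives a subgroup of index `m · [ℤ² : L]` isomorphic to
`G₂`. Putting `L` in Hermite normal form (basis `(a, 0), (b, d)` with `0 ≤ b < a`) and `v` in the
box `[0, a) × [0, d)`, a lattice of index `k` contributes `k` subgroups and there are `σ₁(k)` such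
lattices, so the count is the sum of `k σ₁(k)` over the divisors `k ∣ n` with `n / k` odd, which
is `ω(n) - ω(n/2)`.
-/

lemma Int.add_emod_two (k l : ℤ) : (k + l) % 2 = k % 2 + k.negOnePow * (l % 2) := by
  rcases Int.even_or_odd k with hk | hk
  · rw [Int.negOnePow_even _ hk]; rw [Int.even_iff] at hk; push_cast; omega
  · rw [Int.negOnePow_odd _ hk]; rw [Int.odd_iff] at hk; push_cast; omega

lemma Int.mul_emod_two_of_odd {m : ℤ} (hm : Odd m) (k : ℤ) : k * m % 2 = k % 2 := by
  rw [Int.mul_emod, Int.odd_iff.mp hm, mul_one, Int.emod_emod_of_dvd _ dvd_rfl]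

lemma Int.negOnePow_mul_of_odd {m : ℤ} (hm : Odd m) (k : ℤ) :
    (k * m).negOnePow = k.negOnePow := by
  rw [Int.negOnePow_eq_iff]
  obtain ⟨j, rfl⟩ := hm
  exact ⟨k * j, by ring⟩

lemma AddSubgroup.units_smul_mem_iff {A : Type*} [AddCommGroup A] (L : AddSubgroup A) (u : ℤˣ)
    {x : A} : u • x ∈ L ↔ x ∈ L :=
  ⟨fun h => by simpa [Units.smul_def, smul_smul] using L.zsmul_mem h (u : ℤ),
    fun h => L.zsmul_mem h u⟩

lemma AddSubgroup.exists_eq_zmultiples_natCast (S : AddSubgroup ℤ) :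
    ∃ n : ℕ, S = AddSubgroup.zmultiples (n : ℤ) := by
  obtain ⟨a, rfl⟩ := Int.subgroup_cyclic S
  exact ⟨a.natAbs, by rw [Int.zmultiples_natAbs, AddSubgroup.zmultiples_eq_closure]⟩

lemma SemiconjBy.zpow_left_of_inv {G : Type*} [Group G] {g a : G} (h : SemiconjBy g a a⁻¹)
    (c : ℤ) : SemiconjBy (g ^ c) a (a ^ (c.negOnePow : ℤ)) := by
  induction c using Int.induction_on with
  | zero => simp
  | succ c ih =>
    rw [zpow_add_one, Int.negOnePow_succ, Units.val_neg, zpow_neg]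
    exact ih.inv_right.mul_left h
  | pred c ih =>
    rw [zpow_sub_one, Int.negOnePow_sub, Int.negOnePow_one, mul_neg, mul_one, Units.val_neg,
      zpow_neg]
    simpa using ih.inv_right.mul_left h.inv_symm_left.inv_right

def hermiteMap (a b d : ℕ) : ℤ × ℤ →+ ℤ × ℤ where
  toFun w := (w.1 * a + w.2 * b, w.2 * d)
  map_zero' := by simp
  map_add' w w' := by ext <;> simp only [Prod.fst_add, Prod.snd_add] <;> ring

def hermiteLattice (a b d : ℕ) : AddSubgroup (ℤ × ℤ) := (hermiteMap a b d).range

def fundamentalBox (a d : ℕ) : Set (ℤ × ℤ) := Set.Ico 0 (a : ℤ) ×ˢ Set.Ico 0 (d : ℤ)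

lemma hermiteMap_injective {a d : ℕ} (ha : 0 < a) (hd : 0 < d) (b : ℕ) :
    Function.Injective (hermiteMap a b d) := by
  refine (injective_iff_map_eq_zero _).mpr fun ⟨s, t⟩ h => ?_
  obtain ⟨hs, ht⟩ := Prod.ext_iff.mp h
  simp only [hermiteMap, AddMonoidHom.coe_mk, ZeroHom.coe_mk, Prod.fst_zero,
    Prod.snd_zero] at hs ht
  obtain rfl : t = 0 := (mul_eq_zero.mp ht).resolve_right (by omega)
  obtain rfl : s = 0 := by simpa [ha.ne'] using hs
  rfl

lemma mem_hermiteLattice {a b d : ℕ} {w : ℤ × ℤ} :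
    w ∈ hermiteLattice a b d ↔ ∃ s t : ℤ, (s * a + t * b, t * d) = w := by
  simp [hermiteLattice, hermiteMap]

lemma mk_mem_hermiteLattice (a b d : ℕ) (s t : ℤ) :
    (s * a + t * b, t * d) ∈ hermiteLattice a b d :=
  mem_hermiteLattice.mpr ⟨s, t, rfl⟩

lemma mk_zero_mem_hermiteLattice_iff {a b d : ℕ} (hd : 0 < d) {x : ℤ} :
    (x, 0) ∈ hermiteLattice a b d ↔ (a : ℤ) ∣ x := by
  refine ⟨fun h => ?_, fun ⟨s, hs⟩ => mem_hermiteLattice.mpr ⟨s, 0, by simp [hs, mul_comm]⟩⟩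
  obtain ⟨s, t, hst⟩ := mem_hermiteLattice.mp h
  simp only [Prod.ext_iff] at hst
  obtain rfl : t = 0 := (mul_eq_zero.mp hst.2).resolve_right (by omega)
  exact ⟨s, by linarith [hst.1]⟩

lemma dvd_of_mk_mem_hermiteLattice {a b d : ℕ} {x y : ℤ} (h : (x, y) ∈ hermiteLattice a b d) :
    (d : ℤ) ∣ y := by
  obtain ⟨s, t, hst⟩ := mem_hermiteLattice.mp h
  exact Dvd.intro_left t (Prod.ext_iff.mp hst).2

lemma card_fundamentalBox (a d : ℕ) : Nat.card (fundamentalBox a d) = a * d := by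
  rw [fundamentalBox, Nat.card_congr (Equiv.Set.prod _ _), Nat.card_prod]
  simp [Nat.card_eq_fintype_card]

lemma eq_of_sub_mem_hermiteLattice {a b d : ℕ} {u u' : ℤ × ℤ} (hu : u ∈ fundamentalBox a d)
    (hu' : u' ∈ fundamentalBox a d) (h : u - u' ∈ hermiteLattice a b d) : u = u' := by
  obtain ⟨s, t, hst⟩ := mem_hermiteLattice.mp h
  simp only [fundamentalBox, Set.mem_prod, Set.mem_Ico] at hu hu'
  simp only [Prod.ext_iff, Prod.fst_sub, Prod.snd_sub] at hst
  have ht : t * d = 0 :=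
    Int.eq_zero_of_abs_lt_dvd (Dvd.intro_left _ rfl) (by rw [abs_lt]; omega)
  obtain rfl : t = 0 := (mul_eq_zero.mp ht).resolve_right (by omega)
  have hs : s * a = 0 :=
    Int.eq_zero_of_abs_lt_dvd (Dvd.intro_left _ rfl) (by rw [abs_lt]; omega)
  ext <;> linarith [hst.1, hst.2]

lemma isComplement_fundamentalBox {a d : ℕ} (ha : 0 < a) (hd : 0 < d) (b : ℕ) :
    AddSubgroup.IsComplement (fundamentalBox a d) (hermiteLattice a b d) := by
  refine AddSubgroup.isComplement_iff_existsUnique_neg_add_mem.mpr fun w => ?_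
  set t := w.2 / d
  set r := w.1 - t * b
  have hu : (r % a, w.2 % d) ∈ fundamentalBox a d := by
    simp only [fundamentalBox, Set.mem_prod, Set.mem_Ico]
    refine ⟨⟨Int.emod_nonneg _ ?_, Int.emod_lt_of_pos _ ?_⟩, Int.emod_nonneg _ ?_,
      Int.emod_lt_of_pos _ ?_⟩ <;> omega
  have hw : -(r % a, w.2 % d) + w ∈ hermiteLattice a b d := by
    refine mem_hermiteLattice.mpr ⟨r / a, t, ?_⟩
    have h₁ := Int.mul_ediv_add_emod r a
    have h₂ := Int.mul_ediv_add_emod w.2 d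
    ext <;> simp only [Prod.fst_add, Prod.snd_add, Prod.fst_neg, Prod.snd_neg] <;> linarith
  refine ⟨⟨_, hu⟩, hw, fun u hu' => Subtype.ext ?_⟩
  refine eq_of_sub_mem_hermiteLattice (b := b) u.2 hu ?_
  convert sub_mem hw hu' using 1
  abel

lemma index_hermiteLattice {a d : ℕ} (ha : 0 < a) (hd : 0 < d) (b : ℕ) :
    (hermiteLattice a b d).index = a * d := by
  rw [← (isComplement_fundamentalBox ha hd b).card_left, card_fundamentalBox]

lemma hermiteLattice_inj {a b d a' b' d' : ℕ} (hd : 0 < d) (hb : b < a)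
    (hd' : 0 < d') (hb' : b' < a') (h : hermiteLattice a b d = hermiteLattice a' b' d') :
    a = a' ∧ b = b' ∧ d = d' := by
  have hA : ((a : ℤ), 0) ∈ hermiteLattice a b d := by
    simpa using mk_mem_hermiteLattice a b d 1 0
  have hA' : ((a' : ℤ), 0) ∈ hermiteLattice a' b' d' := by
    simpa using mk_mem_hermiteLattice a' b' d' 1 0
  have hB : ((b : ℤ), (d : ℤ)) ∈ hermiteLattice a b d := by
    simpa using mk_mem_hermiteLattice a b d 0 1
  have hB' : ((b' : ℤ), (d' : ℤ)) ∈ hermiteLattice a' b' d' := by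
    simpa using mk_mem_hermiteLattice a' b' d' 0 1
  rw [h] at hA
  rw [← h] at hA' hB'
  obtain rfl : a = a' := Nat.dvd_antisymm
    (Int.natCast_dvd_natCast.mp ((mk_zero_mem_hermiteLattice_iff hd).mp hA'))
    (Int.natCast_dvd_natCast.mp ((mk_zero_mem_hermiteLattice_iff hd').mp hA))
  obtain rfl : d = d' := Nat.dvd_antisymm
    (Int.natCast_dvd_natCast.mp (dvd_of_mk_mem_hermiteLattice hB'))
    (Int.natCast_dvd_natCast.mp (dvd_of_mk_mem_hermiteLattice (h ▸ hB)))
  have hbb : ((b : ℤ), (0 : ℤ)) = ((b' : ℤ), 0) :=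
    eq_of_sub_mem_hermiteLattice (a := a) (b := b) (d := d)
      (by simp only [fundamentalBox, Set.mem_prod, Set.mem_Ico]; omega) (by simp only [fundamentalBox, Set.mem_prod, Set.mem_Ico]; omega)
      (by simpa using sub_mem hB hB')
  simp only [Prod.mk.injEq, Nat.cast_inj, and_true] at hbb
  exact ⟨rfl, hbb, rfl⟩

lemma exists_eq_hermiteLattice {L : AddSubgroup (ℤ × ℤ)} (hL : L.index ≠ 0) :
    ∃ a b d : ℕ, 0 < a ∧ 0 < d ∧ b < a ∧ L = hermiteLattice a b d := by
  obtain ⟨a, hA⟩ := (L.comap (AddMonoidHom.inl ℤ ℤ)).exists_eq_zmultiples_natCast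
  obtain ⟨d, hD⟩ := (L.map (AddMonoidHom.snd ℤ ℤ)).exists_eq_zmultiples_natCast
  have hA' : ∀ x : ℤ, (x, 0) ∈ L ↔ (a : ℤ) ∣ x := fun x => by
    rw [← Int.mem_zmultiples_iff, ← hA]; rfl
  have hD' : ∀ y : ℤ, (∃ x, (x, y) ∈ L) ↔ (d : ℤ) ∣ y := fun y => by
    rw [← Int.mem_zmultiples_iff, ← hD]; simp
  have ha : 0 < a := by
    have := L.relIndex_dvd_index_of_normal (AddMonoidHom.inl ℤ ℤ).range
    rw [← AddSubgroup.index_comap, hA, Int.index_zmultiples, Int.natAbs_natCast] at this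
    exact Nat.pos_of_ne_zero fun h0 => hL (Nat.eq_zero_of_zero_dvd (h0 ▸ this))
  have hd : 0 < d := by
    have := L.index_map_dvd (f := AddMonoidHom.snd ℤ ℤ) Prod.snd_surjective
    rw [hD, Int.index_zmultiples, Int.natAbs_natCast] at this
    exact Nat.pos_of_ne_zero fun h0 => hL (Nat.eq_zero_of_zero_dvd (h0 ▸ this))
  obtain ⟨b₀, hb₀⟩ := (hD' d).mpr dvd_rfl
  set b := (b₀ % a).toNat
  have hb : (b : ℤ) = b₀ % a := Int.toNat_of_nonneg (Int.emod_nonneg b₀ (by omega))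
  have hbd : ((b : ℤ), (d : ℤ)) ∈ L := by
    simpa using sub_mem hb₀ ((hA' (b₀ - b)).mpr (by rw [hb]; exact Int.dvd_self_sub_emod))
  refine ⟨a, b, d, ha, hd, by have := Int.emod_lt_of_pos b₀ (by omega : (0 : ℤ) < a); omega,
    le_antisymm (fun w hw => ?_) (fun w hw => ?_)⟩
  · obtain ⟨t, ht⟩ := (hD' w.2).mp ⟨w.1, hw⟩
    obtain ⟨s, hs⟩ := (hA' (w.1 - t * b)).mp (by
      convert sub_mem hw (zsmul_mem hbd t) using 1
      ext <;> simp [ht, mul_comm])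
    exact mem_hermiteLattice.mpr ⟨s, t, by ext <;> simp only <;> linarith⟩
  · obtain ⟨s, t, rfl⟩ := mem_hermiteLattice.mp hw
    convert add_mem (zsmul_mem ((hA' a).mpr dvd_rfl) s) (zsmul_mem hbd t) using 1
    ext <;> simp

/-- `(ℤ × ℤ) ⋊ ℤ`, the generator of `ℤ` acting by `-1`; `⟨(x, y), c⟩` stands for
`X ^ x * Y ^ y * Z ^ c`. -/
@[ext]
structure G2Model_s15 where
  v : ℤ × ℤ
  c : ℤ

namespace G2Model_s15

instance : Mul G2Model_s15 := ⟨fun g h => ⟨g.v + g.c.negOnePow • h.v, g.c + h.c⟩⟩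
instance : One G2Model_s15 := ⟨⟨0, 0⟩⟩
instance : Inv G2Model_s15 := ⟨fun g => ⟨-(g.c.negOnePow • g.v), -g.c⟩⟩

@[simp] lemma mul_v (g h : G2Model_s15) : (g * h).v = g.v + g.c.negOnePow • h.v := rfl
@[simp] lemma mul_c (g h : G2Model_s15) : (g * h).c = g.c + h.c := rfl
@[simp] lemma one_v : (1 : G2Model_s15).v = 0 := rfl
@[simp] lemma one_c : (1 : G2Model_s15).c = 0 := rfl
@[simp] lemma inv_v (g : G2Model_s15) : g⁻¹.v = -(g.c.negOnePow • g.v) := rfl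
@[simp] lemma inv_c (g : G2Model_s15) : g⁻¹.c = -g.c := rfl

instance : Group G2Model_s15 where
  mul_assoc g h k := by ext <;> simp [Int.negOnePow_add, smul_add, mul_smul, add_assoc]
  one_mul g := by ext <;> simp
  mul_one g := by ext <;> simp
  inv_mul_cancel g := by ext <;> simp [Int.negOnePow_neg]

@[simp] lemma mk_zero_mul (u w : ℤ × ℤ) (c : ℤ) :
    (⟨u, 0⟩ * ⟨w, c⟩ : G2Model_s15) = ⟨u + w, c⟩ := by
  apply G2Model_s15.ext <;> simp

@[simp] lemma mk_mul_inv_mk (u w : ℤ × ℤ) (c : ℤ) :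
    (⟨u, c⟩ * ⟨w, c⟩⁻¹ : G2Model_s15) = ⟨u - w, 0⟩ := by
  apply G2Model_s15.ext <;> simp [smul_smul, sub_eq_add_neg]

lemma mk_zero_inv (w : ℤ × ℤ) : (⟨w, 0⟩ : G2Model_s15)⁻¹ = ⟨-w, 0⟩ := by
  apply G2Model_s15.ext <;> simp

lemma mk_zero_zpow (w : ℤ × ℤ) (k : ℤ) : (⟨w, 0⟩ : G2Model_s15) ^ k = ⟨k • w, 0⟩ := by
  induction k using Int.induction_on with
  | zero => rw [zpow_zero, zero_smul]; rfl
  | succ k ih => rw [zpow_add_one, ih]; apply G2Model_s15.ext <;> simp [add_smul]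
  | pred k ih => rw [zpow_sub_one, ih]; apply G2Model_s15.ext <;> simp [sub_smul]

lemma mk_zpow_of_odd (v : ℤ × ℤ) {m : ℤ} (hm : Odd m) (k : ℤ) :
    (⟨v, m⟩ : G2Model_s15) ^ k = ⟨(k % 2) • v, k * m⟩ := by
  induction k using Int.induction_on with
  | zero => rw [zpow_zero, Int.zero_emod, zero_smul, zero_mul]; rfl
  | succ k ih =>
    rw [zpow_add_one, ih]
    apply G2Model_s15.ext
    · simp [Int.add_emod_two, Int.negOnePow_mul_of_odd hm, add_smul, Units.smul_def]
    · simp only [mul_c]; ring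
  | pred k ih =>
    rw [zpow_sub_one, ih]
    apply G2Model_s15.ext
    · simp [sub_eq_add_neg, Int.add_emod_two, Int.negOnePow_mul_of_odd hm, add_smul,
        Int.negOnePow_odd _ hm, Units.smul_def]
    · simp only [mul_c, inv_c]; ring

lemma commute_of_even {g h : G2Model_s15} (hg : Even g.c) (hh : Even h.c) : Commute g h := by
  apply G2Model_s15.ext <;> simp [Int.negOnePow_even _ hg, Int.negOnePow_even _ hh, add_comm]

lemma not_commute_mk : ¬ Commute (⟨(1, 0), 0⟩ : G2Model_s15) ⟨0, 1⟩ := by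
  intro h
  simpa using congrArg (fun g : G2Model_s15 => g.v.1) h.eq

end G2Model_s15

lemma commute_X_Y : Commute X Y := by
  have h := PresentedGroup.one_of_mem (rels := relsG2) (Or.inl rfl)
  simp only [map_mul, map_inv] at h
  exact mul_inv_eq_iff_eq_mul.mp (mul_inv_eq_one.mp h)

lemma semiconjBy_Z_X : SemiconjBy Z X X⁻¹ := by
  have h := PresentedGroup.one_of_mem (rels := relsG2) (Or.inr (Or.inl rfl))
  simp only [map_mul, map_inv] at h
  exact mul_inv_eq_iff_eq_mul.mp (mul_eq_one_iff_eq_inv.mp h)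

lemma semiconjBy_Z_Y : SemiconjBy Z Y Y⁻¹ := by
  have h := PresentedGroup.one_of_mem (rels := relsG2) (Or.inr (Or.inr rfl))
  simp only [map_mul, map_inv] at h
  exact mul_inv_eq_iff_eq_mul.mp (mul_eq_one_iff_eq_inv.mp h)

namespace G2Model_s15

def toG2 : G2Model_s15 →* G2 where
  toFun g := X ^ g.v.1 * Y ^ g.v.2 * Z ^ g.c
  map_one' := by simp
  map_mul' := by
    rintro ⟨⟨x, y⟩, c⟩ ⟨⟨x', y'⟩, c'⟩
    have hX := (semiconjBy_Z_X.zpow_left_of_inv c).zpow_right x'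
    have hY := (semiconjBy_Z_Y.zpow_left_of_inv c).zpow_right y'
    have hXY : Commute (Y ^ y) (X ^ ((c.negOnePow : ℤ) * x')) :=
      commute_X_Y.symm.zpow_zpow _ _
    simp only [mul_v, mul_c, Prod.smul_mk, Prod.fst_add, Prod.snd_add, Units.smul_def,
      smul_eq_mul, zpow_add]
    symm
    calc X ^ x * Y ^ y * Z ^ c * (X ^ x' * Y ^ y' * Z ^ c')
        = X ^ x * (Y ^ y * (Z ^ c * X ^ x')) * Y ^ y' * Z ^ c' := by group
      _ = X ^ x * (Y ^ y * X ^ ((c.negOnePow : ℤ) * x')) * (Z ^ c * Y ^ y') * Z ^ c' := by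
        rw [hX.eq]; group
      _ = _ := by rw [hXY.eq, hY.eq]; group

def gen : Fin 3 → G2Model_s15 := ![⟨(1, 0), 0⟩, ⟨(0, 1), 0⟩, ⟨0, 1⟩]

lemma gen_rels : ∀ r ∈ relsG2, FreeGroup.lift gen r = 1 := by
  rintro r (rfl | rfl | rfl) <;> apply G2Model_s15.ext <;> simp [gen]

def ofG2 : G2 →* G2Model_s15 := PresentedGroup.toGroup gen_rels

lemma ofG2_toG2 (g : G2Model_s15) : ofG2 (toG2 g) = g := by
  apply G2Model_s15.ext <;>
    simp [toG2, ofG2, X, Y, Z, gen, mk_zero_zpow, mk_zpow_of_odd 0 odd_one g.c]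

lemma toG2_comp_ofG2 : toG2.comp ofG2 = MonoidHom.id G2 := by
  refine PresentedGroup.ext fun i => ?_
  fin_cases i <;> simp [ofG2, gen, toG2, X, Y, Z]

def equivG2 : G2 ≃* G2Model_s15 :=
  MonoidHom.toMulEquiv ofG2 toG2 toG2_comp_ofG2 (MonoidHom.ext ofG2_toG2)

def periods (H : Subgroup G2Model_s15) : AddSubgroup ℤ where
  carrier := {c | ∃ w, ⟨w, c⟩ ∈ H}
  zero_mem' := ⟨0, H.one_mem⟩
  add_mem' := fun ⟨_, hw⟩ ⟨_, hw'⟩ => ⟨_, H.mul_mem hw hw'⟩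
  neg_mem' := fun ⟨_, hw⟩ => ⟨_, H.inv_mem hw⟩

def lattice (H : Subgroup G2Model_s15) : AddSubgroup (ℤ × ℤ) where
  carrier := {w | (⟨w, 0⟩ : G2Model_s15) ∈ H}
  zero_mem' := show (1 : G2Model_s15) ∈ H from H.one_mem
  add_mem' hw hw' := by simpa only [Set.mem_ofPred_eq, mk_zero_mul] using H.mul_mem hw hw'
  neg_mem' hw := by simpa only [Set.mem_ofPred_eq, mk_zero_inv] using H.inv_mem hw

lemma mem_periods {H : Subgroup G2Model_s15} {c : ℤ} : c ∈ periods H ↔ ∃ w, ⟨w, c⟩ ∈ H := Iff.rfl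

lemma mem_lattice {H : Subgroup G2Model_s15} {w : ℤ × ℤ} : w ∈ lattice H ↔ ⟨w, 0⟩ ∈ H := Iff.rfl

/-- For odd `m` this is the subgroup generated by the translations in `L` and `⟨v, m⟩`. -/
def standardSubgroup (m : ℕ) (L : AddSubgroup (ℤ × ℤ)) (v : ℤ × ℤ) : Subgroup G2Model_s15 where
  carrier := {g | (m : ℤ) ∣ g.c ∧ g.v - (g.c % 2) • v ∈ L}
  one_mem' := by simp
  mul_mem' {g h} hg hh := by
    refine ⟨dvd_add hg.1 hh.1, ?_⟩
    convert add_mem hg.2 ((L.units_smul_mem_iff g.c.negOnePow).mpr hh.2) using 1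
    simp only [mul_v, mul_c, Int.add_emod_two, add_smul, smul_sub, Units.smul_def, smul_smul]
    abel
  inv_mem' {g} hg := by
    refine ⟨dvd_neg.mpr hg.1, ?_⟩
    convert neg_mem ((L.units_smul_mem_iff g.c.negOnePow).mpr hg.2) using 1
    rcases Int.even_or_odd g.c with hc | hc
    · simp [Int.negOnePow_even _ hc, Int.even_iff.mp hc]
    · simp [Int.negOnePow_odd _ hc, Int.odd_iff.mp hc, Int.neg_emod_two]

variable {m : ℕ} {L : AddSubgroup (ℤ × ℤ)} {v : ℤ × ℤ}

lemma mem_standardSubgroup {g : G2Model_s15} :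
    g ∈ standardSubgroup m L v ↔ (m : ℤ) ∣ g.c ∧ g.v - (g.c % 2) • v ∈ L := Iff.rfl

lemma mk_zero_mem_standardSubgroup {w : ℤ × ℤ} :
    (⟨w, 0⟩ : G2Model_s15) ∈ standardSubgroup m L v ↔ w ∈ L := by
  simp [mem_standardSubgroup]

lemma mk_mem_standardSubgroup_self (hm : Odd m) : (⟨v, m⟩ : G2Model_s15) ∈ standardSubgroup m L v := by
  simp [mem_standardSubgroup, Int.odd_iff.mp hm.natCast]

lemma standardSubgroup_eq_of_sub_mem {v' : ℤ × ℤ} (h : v - v' ∈ L) :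
    standardSubgroup m L v = standardSubgroup m L v' := by
  ext g
  refine and_congr_right fun _ => ?_
  rw [← L.add_mem_cancel_right (zsmul_mem h (g.c % 2))]
  simp [smul_sub]

lemma standardSubgroup_inj {m' : ℕ} (hm : Odd m) (hm' : Odd m') {L' : AddSubgroup (ℤ × ℤ)}
    {v' : ℤ × ℤ} (h : standardSubgroup m L v = standardSubgroup m' L' v') :
    m = m' ∧ L = L' ∧ v - v' ∈ L' := by
  have hv : (⟨v, m⟩ : G2Model_s15) ∈ standardSubgroup m' L' v' := h ▸ mk_mem_standardSubgroup_self hm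
  have hv' : (⟨v', m'⟩ : G2Model_s15) ∈ standardSubgroup m L v := h ▸ mk_mem_standardSubgroup_self hm'
  refine ⟨Nat.dvd_antisymm (Int.natCast_dvd_natCast.mp hv'.1) (Int.natCast_dvd_natCast.mp hv.1),
    ?_, by simpa [Int.odd_iff.mp hm.natCast] using hv.2⟩
  ext w
  rw [← mk_zero_mem_standardSubgroup (m := m) (v := v), h, mk_zero_mem_standardSubgroup]

/-- The powers of `⟨v, m⟩` give an element `⟨(c % 2) • v, c⟩` of `H` over every `c ∈ mℤ`. -/
lemma eq_standardSubgroup {H : Subgroup G2Model_s15} (hm : Odd m)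
    (hH : periods H = AddSubgroup.zmultiples (m : ℤ)) (hv : ⟨v, m⟩ ∈ H) :
    H = standardSubgroup m (lattice H) v := by
  have hmul : ∀ c : ℤ, (m : ℤ) ∣ c → (⟨(c % 2) • v, c⟩ : G2Model_s15) ∈ H := by
    rintro c ⟨k, rfl⟩
    simpa [mk_zpow_of_odd v hm.natCast, Int.mul_emod_two_of_odd hm.natCast, mul_comm]
      using zpow_mem hv k
  ext ⟨w, c⟩
  constructor
  · intro hg
    have hc : (m : ℤ) ∣ c := Int.mem_zmultiples_iff.mp (hH ▸ mem_periods.mpr ⟨w, hg⟩)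
    exact ⟨hc, mem_lattice.mpr (by simpa using mul_mem hg (inv_mem (hmul c hc)))⟩
  · rintro ⟨hc, hw⟩
    simpa using mul_mem (mem_lattice.mp hw) (hmul c hc)

lemma inv_mul_mem_standardSubgroup_iff {u w : ℤ × ℤ} {r c : ℤ} :
    (⟨u, r⟩⁻¹ * ⟨w, c⟩ : G2Model_s15) ∈ standardSubgroup m L v ↔
      (m : ℤ) ∣ c - r ∧ -u + (w - r.negOnePow • ((c - r) % 2) • v) ∈ L := by
  rw [mem_standardSubgroup, ← L.units_smul_mem_iff r.negOnePow]
  simp only [mul_v, inv_v, inv_c, mul_c, Int.negOnePow_neg, neg_add_eq_sub, smul_sub, smul_smul,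
    Int.units_mul_self, one_smul, sub_right_comm]

lemma isComplement_standardSubgroup (hm : 0 < m) {S : Set (ℤ × ℤ)}
    (hS : AddSubgroup.IsComplement S L) (v : ℤ × ℤ) :
    Subgroup.IsComplement {g : G2Model_s15 | g.v ∈ S ∧ g.c ∈ Set.Ico 0 (m : ℤ)}
      (standardSubgroup m L v) := by
  refine Subgroup.isComplement_iff_existsUnique_inv_mul_mem.mpr fun ⟨w, c⟩ => ?_
  set r := c % m
  have hr : r ∈ Set.Ico 0 (m : ℤ) :=
    ⟨Int.emod_nonneg _ (by omega), Int.emod_lt_of_pos _ (by omega)⟩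
  obtain ⟨⟨u, hu⟩, hwu, huniq⟩ := AddSubgroup.isComplement_iff_existsUnique_neg_add_mem.mp hS
    (w - r.negOnePow • ((c - r) % 2) • v)
  refine ⟨⟨⟨u, r⟩, hu, hr⟩, inv_mul_mem_standardSubgroup_iff.mpr ⟨Int.dvd_self_sub_emod, hwu⟩, ?_⟩
  rintro ⟨⟨u', r'⟩, hu', hr'⟩ hy
  obtain ⟨hdvd, hL⟩ := inv_mul_mem_standardSubgroup_iff.mp hy
  obtain rfl : r' = r := by
    obtain ⟨hr'₀, hr'm⟩ : 0 ≤ r' ∧ r' < m := hr'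
    rw [← Int.emod_eq_of_lt hr'₀ hr'm]
    exact Int.modEq_iff_dvd.mpr hdvd
  obtain rfl : u' = u := congrArg Subtype.val (huniq ⟨u', hu'⟩ hL)
  rfl

lemma index_standardSubgroup (hm : 0 < m) (L : AddSubgroup (ℤ × ℤ)) (v : ℤ × ℤ) :
    (standardSubgroup m L v).index = m * L.index := by
  obtain ⟨S, hS, -⟩ := L.exists_isComplement_left 0
  rw [← (isComplement_standardSubgroup hm hS v).card_left, ← hS.card_left]
  let e : {g : G2Model_s15 | g.v ∈ S ∧ g.c ∈ Set.Ico 0 (m : ℤ)} ≃ S × Set.Ico 0 (m : ℤ) :=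
    { toFun g := (⟨g.1.v, g.2.1⟩, ⟨g.1.c, g.2.2⟩)
      invFun p := ⟨⟨p.1, p.2⟩, p.1.2, p.2.2⟩
      left_inv _ := rfl
      right_inv _ := rfl }
  rw [Nat.card_congr e, Nat.card_prod, mul_comm]
  simp [Nat.card_eq_fintype_card]

def oddEmbedding (hm : Odd m) (f : ℤ × ℤ →+ ℤ × ℤ) (v : ℤ × ℤ) : G2Model_s15 →* G2Model_s15 where
  toFun g := ⟨f g.v + (g.c % 2) • v, g.c * m⟩
  map_one' := by apply G2Model_s15.ext <;> simp
  map_mul' g h := by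
    apply G2Model_s15.ext
    · simp only [mul_v, mul_c, map_add, Int.add_emod_two, Int.negOnePow_mul_of_odd hm.natCast,
        Units.smul_def, map_zsmul, smul_add, add_smul, smul_smul]
      abel
    · simp only [mul_c]; ring

lemma oddEmbedding_injective (hm : Odd m) {f : ℤ × ℤ →+ ℤ × ℤ} (hf : Function.Injective f)
    (v : ℤ × ℤ) : Function.Injective (oddEmbedding hm f v) := by
  refine (injective_iff_map_eq_one _).mpr fun ⟨w, k⟩ h => ?_
  obtain ⟨hw, hk⟩ := G2Model_s15.ext_iff.mp h
  obtain rfl : k = 0 := (mul_eq_zero.mp hk).resolve_right (by exact_mod_cast hm.pos.ne')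
  obtain rfl : w = 0 := hf (by simpa [oddEmbedding] using hw)
  rfl

lemma range_oddEmbedding (hm : Odd m) (f : ℤ × ℤ →+ ℤ × ℤ) (v : ℤ × ℤ) :
    (oddEmbedding hm f v).range = standardSubgroup m f.range v := by
  ext ⟨w, c⟩
  simp only [MonoidHom.mem_range, mem_standardSubgroup, AddMonoidHom.mem_range]
  constructor
  · rintro ⟨⟨u, k⟩, h⟩
    obtain ⟨rfl, rfl⟩ := G2Model_s15.ext_iff.mp h
    exact ⟨Dvd.intro_left _ rfl, u, by simp [oddEmbedding, Int.mul_emod_two_of_odd hm.natCast]⟩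
  · rintro ⟨⟨k, rfl⟩, u, hu⟩
    refine ⟨⟨u, k⟩, G2Model_s15.ext ?_ (mul_comm _ _)⟩
    simp [oddEmbedding, hu, mul_comm (m : ℤ) k, Int.mul_emod_two_of_odd hm.natCast]

lemma nonempty_standardSubgroup_mulEquiv (hm : Odd m) {f : ℤ × ℤ →+ ℤ × ℤ}
    (hf : Function.Injective f) (v : ℤ × ℤ) :
    Nonempty (standardSubgroup m f.range v ≃* G2Model_s15) :=
  ⟨((MonoidHom.ofInjective (oddEmbedding_injective hm hf v)).trans
    (MulEquiv.subgroupCongr (range_oddEmbedding hm f v))).symm⟩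

lemma not_nonempty_mulEquiv_of_even {H : Subgroup G2Model_s15} (hH : ∀ g ∈ H, Even g.c) :
    ¬ Nonempty (H ≃* G2Model_s15) := by
  rintro ⟨e⟩
  refine not_commute_mk ?_
  rw [← e.apply_symm_apply ⟨(1, 0), 0⟩, ← e.apply_symm_apply ⟨0, 1⟩]
  refine Commute.map ?_ e
  exact Subtype.ext (commute_of_even (hH _ (e.symm _).2) (hH _ (e.symm _).2))

lemma exists_eq_standardSubgroup {H : Subgroup G2Model_s15} (he : Nonempty (H ≃* G2Model_s15)) :
    ∃ m : ℕ, Odd m ∧ ∃ v, H = standardSubgroup m (lattice H) v := by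
  obtain ⟨m, hm⟩ := (periods H).exists_eq_zmultiples_natCast
  have hdvd : ∀ g ∈ H, (m : ℤ) ∣ g.c := fun g hg =>
    Int.mem_zmultiples_iff.mp (hm ▸ mem_periods.mpr ⟨g.v, hg⟩)
  -- `m = 0` is even, so it is excluded here too
  have hodd : Odd m := Nat.not_even_iff_odd.mp fun heven =>
    not_nonempty_mulEquiv_of_even (fun g hg => even_iff_two_dvd.mpr
      ((even_iff_two_dvd.mp heven.natCast).trans (hdvd g hg))) he
  obtain ⟨v, hv⟩ := mem_periods.mp (hm ▸ AddSubgroup.mem_zmultiples (m : ℤ))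
  exact ⟨m, hodd, v, eq_standardSubgroup hodd hm hv⟩

end G2Model_s15

lemma sum_divisors_filter_odd_div_add (f : ℕ → ℕ) (n : ℕ) :
    ∑ k ∈ n.divisors with Odd (n / k), f k +
        (if 2 ∣ n then ∑ k ∈ (n / 2).divisors, f k else 0) = ∑ k ∈ n.divisors, f k := by
  rw [← Finset.sum_filter_add_sum_filter_not n.divisors (fun k => Odd (n / k))]
  congr 1
  split_ifs with h2
  · refine Finset.sum_congr (Finset.ext fun k => ?_) fun _ _ => rfl
    simp only [Finset.mem_filter, Nat.mem_divisors, Nat.not_odd_iff_even, even_iff_two_dvd]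
    constructor
    · rintro ⟨h, hn⟩
      have h' := (Nat.dvd_div_iff_mul_dvd h2).mp h
      exact ⟨⟨(Dvd.intro_left 2 rfl).trans h', by omega⟩,
        (Nat.dvd_div_iff_mul_dvd ((Dvd.intro_left 2 rfl).trans h')).mpr (mul_comm 2 k ▸ h')⟩
    · rintro ⟨⟨hk, hn⟩, h⟩
      exact ⟨(Nat.dvd_div_iff_mul_dvd h2).mpr (mul_comm k 2 ▸ (Nat.dvd_div_iff_mul_dvd hk).mp h),
        by omega⟩
  · refine (Finset.sum_eq_zero fun k hk => absurd ?_ h2).symm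
    obtain ⟨hk, hodd⟩ := Finset.mem_filter.mp hk
    exact (even_iff_two_dvd.mp (Nat.not_odd_iff_even.mp hodd)).trans
      (Nat.div_dvd_of_dvd (Nat.dvd_of_mem_divisors hk))

/-- `⟨⟨k, a, d⟩, b, v₁, v₂⟩` encodes the subgroup `standardSubgroup (n / k) L (v₁, v₂)` of index
`n`, where `L = hermiteLattice a b d` has index `k = a * d`. -/
def subgroupParams (n : ℕ) : Finset (Σ _ : (Σ _ : ℕ, ℕ × ℕ), ℕ × ℕ × ℕ) :=
  ((n.divisors.filter fun k => Odd (n / k)).sigma fun k => k.divisorsAntidiagonal).sigma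
    fun p => Finset.range p.2.1 ×ˢ Finset.range p.2.1 ×ˢ Finset.range p.2.2

def paramSubgroup (n : ℕ) (x : Σ _ : (Σ _ : ℕ, ℕ × ℕ), ℕ × ℕ × ℕ) : Subgroup G2Model_s15 :=
  G2Model_s15.standardSubgroup (n / x.1.1) (hermiteLattice x.1.2.1 x.2.1 x.1.2.2) (x.2.2.1, x.2.2.2)

lemma mem_subgroupParams {n k a d b v₁ v₂ : ℕ} :
    (⟨⟨k, a, d⟩, b, v₁, v₂⟩ : Σ _ : (Σ _ : ℕ, ℕ × ℕ), ℕ × ℕ × ℕ) ∈ subgroupParams n ↔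
      (((k ∣ n ∧ n ≠ 0) ∧ Odd (n / k)) ∧ a * d = k ∧ k ≠ 0) ∧ b < a ∧ v₁ < a ∧ v₂ < d := by
  simp [subgroupParams]

lemma card_subgroupParams (n : ℕ) :
    (subgroupParams n).card = ∑ k ∈ n.divisors with Odd (n / k), k * sigma1 k := by
  rw [subgroupParams, Finset.card_sigma, Finset.sum_sigma]
  refine Finset.sum_congr rfl fun k _ => ?_
  calc ∑ p ∈ k.divisorsAntidiagonal, (Finset.range p.1 ×ˢ Finset.range p.1 ×ˢ
          Finset.range p.2).card
      = ∑ p ∈ k.divisorsAntidiagonal, p.1 * k := by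
        refine Finset.sum_congr rfl fun p hp => ?_
        simp only [Finset.card_product, Finset.card_range, (Nat.mem_divisorsAntidiagonal.mp hp).1]
    _ = k * sigma1 k := by
        rw [← Finset.sum_mul, Nat.sum_divisorsAntidiagonal (fun a _ => a), sigma1, mul_comm]

lemma paramSubgroup_index_eq_and_nonempty_mulEquiv {n : ℕ}
    {x : Σ _ : (Σ _ : ℕ, ℕ × ℕ), ℕ × ℕ × ℕ} (hx : x ∈ subgroupParams n) :
    (paramSubgroup n x).index = n ∧ Nonempty (paramSubgroup n x ≃* G2Model_s15) := by
  obtain ⟨⟨k, a, d⟩, b, v₁, v₂⟩ := x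
  obtain ⟨⟨⟨⟨hk, -⟩, hodd⟩, had, hk0⟩, -⟩ := mem_subgroupParams.mp hx
  have ha : 0 < a := Nat.pos_of_ne_zero fun h => hk0 (by simp [← had, h])
  have hd : 0 < d := Nat.pos_of_ne_zero fun h => hk0 (by simp [← had, h])
  refine ⟨?_, G2Model_s15.nonempty_standardSubgroup_mulEquiv hodd (hermiteMap_injective ha hd b) _⟩
  rw [paramSubgroup, G2Model_s15.index_standardSubgroup hodd.pos, index_hermiteLattice ha hd, had,
    Nat.div_mul_cancel hk]

lemma paramSubgroup_injOn (n : ℕ) : Set.InjOn (paramSubgroup n) (subgroupParams n) := by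
  rintro ⟨⟨k, a, d⟩, b, v₁, v₂⟩ hx ⟨⟨k', a', d'⟩, b', v₁', v₂'⟩ hx' h
  obtain ⟨⟨⟨-, hodd⟩, had, hk0⟩, hb, hv₁, hv₂⟩ := mem_subgroupParams.mp hx
  obtain ⟨⟨⟨-, hodd'⟩, had', hk0'⟩, hb', hv₁', hv₂'⟩ := mem_subgroupParams.mp hx'
  obtain ⟨-, hL, hv⟩ := G2Model_s15.standardSubgroup_inj hodd hodd' h
  have hd : 0 < d := Nat.pos_of_ne_zero fun h => hk0 (by simp [← had, h])
  have hd' : 0 < d' := Nat.pos_of_ne_zero fun h => hk0' (by simp [← had', h])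
  obtain ⟨rfl, rfl, rfl⟩ := hermiteLattice_inj hd hb hd' hb' hL
  have hv := eq_of_sub_mem_hermiteLattice (by simp only [fundamentalBox, Set.mem_prod, Set.mem_Ico]; omega)
    (by simp only [fundamentalBox, Set.mem_prod, Set.mem_Ico]; omega) hv
  simp only [Prod.mk.injEq, Nat.cast_inj] at hv
  obtain ⟨rfl, rfl⟩ := hv
  subst had had'
  rfl

lemma exists_paramSubgroup_eq {n : ℕ} (hn : n ≠ 0) {H : Subgroup G2Model_s15} (hH : H.index = n)
    (he : Nonempty (H ≃* G2Model_s15)) : ∃ x ∈ subgroupParams n, paramSubgroup n x = H := by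
  obtain ⟨m, hodd, v, hHv⟩ := G2Model_s15.exists_eq_standardSubgroup he
  set L := G2Model_s15.lattice H
  have hmL : m * L.index = n := by
    rw [← G2Model_s15.index_standardSubgroup hodd.pos L v, ← hHv, hH]
  obtain ⟨a, b, d, ha, hd, hb, hL⟩ := exists_eq_hermiteLattice (L := L) fun h => by
    rw [h, mul_zero] at hmL; exact hn hmL.symm
  rw [hL, index_hermiteLattice ha hd] at hmL
  obtain ⟨⟨u, hu⟩, huv, -⟩ := AddSubgroup.isComplement_iff_existsUnique_neg_add_mem.mp
    (isComplement_fundamentalBox ha hd b) v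
  obtain ⟨⟨hu₁, hu₁'⟩, hu₂, hu₂'⟩ := hu
  have hm : n / (a * d) = m := Nat.div_eq_of_eq_mul_left (by positivity) hmL.symm
  refine ⟨⟨⟨a * d, a, d⟩, b, u.1.toNat, u.2.toNat⟩, mem_subgroupParams.mpr
    ⟨⟨⟨⟨Dvd.intro_left m hmL, hn⟩, hm ▸ hodd⟩, rfl, by positivity⟩, hb, by omega, by omega⟩, ?_⟩
  have hu : ((u.1.toNat : ℤ), (u.2.toNat : ℤ)) = u :=
    Prod.ext (Int.toNat_of_nonneg hu₁) (Int.toNat_of_nonneg hu₂)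
  rw [paramSubgroup, hm, hu]
  conv_rhs => rw [hHv, hL]
  refine G2Model_s15.standardSubgroup_eq_of_sub_mem ?_
  convert neg_mem huv using 1
  abel

lemma G2Model_s15.card_subgroups_eq_card_subgroupParams {n : ℕ} (hn : n ≠ 0) :
    Nat.card {H : Subgroup G2Model_s15 // H.index = n ∧ Nonempty (H ≃* G2Model_s15)} =
      (subgroupParams n).card := by
  rw [← Nat.card_eq_finsetCard]
  refine (Nat.card_congr (Equiv.ofBijective
    (fun x => ⟨paramSubgroup n x, paramSubgroup_index_eq_and_nonempty_mulEquiv x.2⟩)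
    ⟨fun x y h => Subtype.ext (paramSubgroup_injOn n x.2 y.2 (congrArg Subtype.val h)), ?_⟩)).symm
  rintro ⟨H, hH, he⟩
  obtain ⟨x, hx, rfl⟩ := exists_paramSubgroup_eq hn hH he
  exact ⟨⟨x, hx⟩, rfl⟩

lemma card_subgroups_congr {G G' : Type*} [Group G] [Group G'] (e : G ≃* G') (n : ℕ) :
    Nat.card {H : Subgroup G // H.index = n ∧ Nonempty (H ≃* G)} =
      Nat.card {H : Subgroup G' // H.index = n ∧ Nonempty (H ≃* G')} := by
  refine Nat.card_congr (e.mapSubgroup.toEquiv.subtypeEquiv fun H => ?_)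
  change _ ↔ (H.map (e : G →* G')).index = n ∧ Nonempty (H.map (e : G →* G') ≃* G')
  rw [Subgroup.index_map_equiv]
  exact and_congr_right fun _ => ⟨fun ⟨f⟩ => ⟨(e.subgroupMap H).symm.trans (f.trans e)⟩,
    fun ⟨f⟩ => ⟨(e.subgroupMap H).trans (f.trans e.symm)⟩⟩

/-- The number of index-`n` subgroups of `G₂` isomorphic to `G₂` equals `ω(n) − ω(n/2)`,
where `ω(n/2) = 0` for odd `n`. -/
theorem count_G2_subgroups (n : ℕ) (hn : 0 < n) :
    Nat.card {H : Subgroup G2 // H.index = n ∧ Nonempty (H ≃* G2)} =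
      omegaFn n - (if 2 ∣ n then omegaFn (n / 2) else 0) := by
  rw [card_subgroups_congr G2Model_s15.equivG2, G2Model_s15.card_subgroups_eq_card_subgroupParams hn.ne',
    card_subgroupParams]
  have := sum_divisors_filter_odd_div_add (fun k => k * sigma1 k) n
  rw [omegaFn, omegaFn]
  omega
end

section
/- For every n ≥ 1, the identity ∑_{a∣n, a odd} (σ₁(n/a) + 3σ₁(n/(2a))) = σ₂(n) + 2σ₂(n/2) − 3σ₂(n/4) holds, where σ₂(m) = ∑_{k∣m} σ₁(k) and σ₁ and σ₂ are taken to be 0 at non-integer arguments. -/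
/-- σ₂(n) = ∑_{k ∣ n} σ₁(k). -/
def sigma2 (n : ℕ) : ℕ := ∑ k ∈ n.divisors, sigma1 k

/-!
Split the divisors `a` of `n` by parity. The even ones, `a = 2b` with `b ∣ n/2`, contribute
`∑_{b ∣ n/2} σ₁((n/2)/b) = σ₂(n/2)`, so `∑_{a ∣ n, a odd} σ₁(n/a) = σ₂(n) − σ₂(n/2)`. The second sum
is this same odd-divisor sum for `n/2`, namely `σ₂(n/2) − σ₂(n/4)`, and the identity is then linear
algebra in `σ₂(n), σ₂(n/2), σ₂(n/4)`.
-/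

open Finset

namespace Nat

variable {M : Type*}

theorem filter_not_odd_divisors_two_mul (m : ℕ) :
    {a ∈ (2 * m).divisors | ¬Odd a} = m.divisors.map ⟨(2 * ·), mul_right_injective₀ two_ne_zero⟩ := by
  ext a
  simp only [mem_filter, Nat.mem_divisors, Nat.not_odd_iff_even, mem_map,
    Function.Embedding.coeFn_mk]
  constructor
  · rintro ⟨⟨had, hm⟩, he⟩
    obtain ⟨b, rfl⟩ := he.two_dvd
    exact ⟨b, ⟨(Nat.mul_dvd_mul_iff_left two_pos).mp had, by simpa using hm⟩, rfl⟩
  · rintro ⟨b, ⟨hbd, hm⟩, rfl⟩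
    exact ⟨⟨mul_dvd_mul_left 2 hbd, by simpa using hm⟩, even_two_mul b⟩

theorem sum_not_odd_divisors_two_mul_div [AddCommMonoid M] (f : ℕ → M) (m : ℕ) :
    ∑ a ∈ (2 * m).divisors with ¬Odd a, f (2 * m / a) = ∑ k ∈ m.divisors, f k := by
  rw [Nat.filter_not_odd_divisors_two_mul, sum_map, ← Nat.sum_div_divisors m f]
  refine sum_congr rfl fun b _ => ?_
  simp [Nat.mul_div_mul_left _ _ two_pos]

theorem sum_odd_divisors_div [AddCommGroup M] (f : ℕ → M) (n : ℕ) :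
    ∑ a ∈ n.divisors with Odd a, f (n / a) =
      ∑ k ∈ n.divisors, f k - if 2 ∣ n then ∑ k ∈ (n / 2).divisors, f k else 0 := by
  have hsplit := sum_filter_add_sum_filter_not n.divisors (fun a => Odd a) (fun a => f (n / a))
  rw [Nat.sum_div_divisors] at hsplit
  rw [← hsplit]
  split_ifs with h2
  · obtain ⟨m, rfl⟩ := h2
    rw [Nat.sum_not_odd_divisors_two_mul_div, Nat.mul_div_cancel_left _ two_pos, add_sub_cancel_right]
  · have hodd : ∀ a ∈ n.divisors, Odd a := fun a ha =>
      (Nat.odd_iff.mpr (Nat.two_dvd_ne_zero.mp h2)).of_dvd_nat (Nat.dvd_of_mem_divisors ha)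
    rw [filter_false_of_mem fun a ha => not_not.mpr (hodd a ha), sum_empty, add_zero, sub_zero]

theorem sum_odd_divisors_ite_two_mul_dvd [AddCommMonoid M] (f : ℕ → M) (n : ℕ) :
    ∑ a ∈ n.divisors with Odd a, (if 2 * a ∣ n then f (n / (2 * a)) else 0) =
      if 2 ∣ n then ∑ a ∈ (n / 2).divisors with Odd a, f (n / 2 / a) else 0 := by
  split_ifs with h2
  · obtain ⟨m, rfl⟩ := h2
    simp_rw [Nat.mul_dvd_mul_iff_left two_pos, Nat.mul_div_mul_left _ _ two_pos,
      Nat.mul_div_cancel_left _ two_pos, ← sum_filter, filter_filter]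
    congr 1
    ext a
    simp only [mem_filter, Nat.mem_divisors]
    constructor
    · rintro ⟨⟨-, hm⟩, ho, ha⟩
      exact ⟨⟨ha, by simpa using hm⟩, ho⟩
    · rintro ⟨⟨ha, hm⟩, ho⟩
      exact ⟨⟨Dvd.dvd.mul_left ha 2, by simpa using hm⟩, ho, ha⟩
  · exact sum_eq_zero fun a _ => if_neg fun h => h2 ((dvd_mul_right 2 a).trans h)

end Nat

theorem odd_divisor_sum_identity_general (n : ℕ) :
    ∑ a ∈ n.divisors.filter (fun a => Odd a),
        ((sigma1 (n / a) : ℤ) +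
          3 * (if 2 * a ∣ n then (sigma1 (n / (2 * a)) : ℤ) else 0)) =
      (sigma2 n : ℤ) + 2 * (if 2 ∣ n then (sigma2 (n / 2) : ℤ) else 0) -
        3 * (if 4 ∣ n then (sigma2 (n / 4) : ℤ) else 0) := by
  set f : ℕ → ℤ := fun k => sigma1 k
  have cast_sigma2 (m : ℕ) : (sigma2 m : ℤ) = ∑ k ∈ m.divisors, f k := by
    simp [f, sigma2]
  rw [sum_add_distrib, ← mul_sum, Nat.sum_odd_divisors_div f, Nat.sum_odd_divisors_ite_two_mul_dvd f,
    Nat.sum_odd_divisors_div f (n / 2), Nat.div_div_eq_div_mul]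
  simp only [cast_sigma2]
  -- `omega` closes the branches whose conditions on `2 ∣ n`, `2 ∣ n / 2`, `4 ∣ n` are incompatible
  split_ifs <;> first | omega | ring

/-- For every `n ≥ 1`,
`∑_{a∣n, a odd} (σ₁(n/a) + 3σ₁(n/(2a))) = σ₂(n) + 2σ₂(n/2) − 3σ₂(n/4)`,
where `σ₁` and `σ₂` at non-integer arguments are interpreted as `0`. -/
theorem odd_divisor_sum_identity (n : ℕ) (hn : 1 ≤ n) :
    ∑ a ∈ n.divisors.filter (fun a => Odd a),
        ((sigma1 (n / a) : ℤ) +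
          3 * (if 2 * a ∣ n then (sigma1 (n / (2 * a)) : ℤ) else 0)) =
      (sigma2 n : ℤ) + 2 * (if 2 ∣ n then (sigma2 (n / 2) : ℤ) else 0) -
        3 * (if 4 ∣ n then (sigma2 (n / 4) : ℤ) else 0) :=
  odd_divisor_sum_identity_general n
end
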